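/- arXiv:2510.17470 — 7 statements merged into one kernel-verified Lean document; each statement's English description precedes it below -/
import Mathlib

section
/- With S_m and M_N the explicit Gamma-product evaluations of the Selberg and Morris integrals, the identity S_m(η₂ − m, η₁)/S_m(η₂ − m, η₁ + N) = M_N(η₁ + m, η₂)/M_N(η₁, η₂) holds for all parameters where both sides are defined. -/
open Finset

/-- Selberg integral evaluation `S_N(α,β)`. -/
noncomputable def Sel (N : ℕ) (α β : ℂ) : ℂ :=
  ∏ j ∈ Finset.range N,
    Complex.Gamma (α + j + 1) * Complex.Gamma (β + j + 1) * Complex.Gamma ((j : ℂ) + 2)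
      / Complex.Gamma (α + β + N + j + 1)

/-- Morris integral evaluation `M_N(α,β)`. -/
noncomputable def Mor (N : ℕ) (α β : ℂ) : ℂ :=
  (2 * (Real.pi : ℂ)) ^ N *
    ∏ j ∈ Finset.range N,
      Complex.Gamma (α + β + j + 1) * Complex.Gamma ((j : ℂ) + 2)
        / (Complex.Gamma (α + j + 1) * Complex.Gamma (β + j + 1))

/-!
Both sides are quotients of products `P(z, k) = Γ(z+1) Γ(z+2) ⋯ Γ(z+k)`. After the factors
that do not depend on the shifted parameter cancel, the left side is `R_{m,N}(η₁) / R_{m,N}(η₁+η₂)`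
and the right side `R_{N,m}(η₁) / R_{N,m}(η₁+η₂)`, where `R_{k,n}(z) = P(z, k) / P(z+n, k)`.
Splitting the block `P(z, m+N)` of consecutive factors in two ways gives
`P(z, m) P(z+m, N) = P(z, N) P(z+N, m)`, i.e. `R_{m,N} = R_{N,m}`.
-/

noncomputable def gammaProd (z : ℂ) (k : ℕ) : ℂ :=
  ∏ j ∈ range k, Complex.Gamma (z + j + 1)

lemma gammaProd_ne_zero {z : ℂ} {k : ℕ} (h : ∀ j ∈ range k, Complex.Gamma (z + j + 1) ≠ 0) :
    gammaProd z k ≠ 0 :=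
  prod_ne_zero_iff.mpr h

lemma gammaProd_one_ne_zero (k : ℕ) : gammaProd 1 k ≠ 0 := by
  refine gammaProd_ne_zero fun j _ => ?_
  rw [show (1 : ℂ) + j + 1 = ((j + 1 : ℕ) : ℂ) + 1 by push_cast; ring,
    Complex.Gamma_nat_eq_factorial]
  exact_mod_cast (j + 1).factorial_ne_zero

lemma gammaProd_add (z : ℂ) (a b : ℕ) :
    gammaProd z (a + b) = gammaProd z a * gammaProd (z + a) b := by
  unfold gammaProd
  rw [prod_range_add]
  congr 1
  refine prod_congr rfl fun j _ => ?_
  push_cast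
  ring_nf

lemma gammaProd_div_gammaProd_comm (z : ℂ) (m n : ℕ)
    (hm : gammaProd (z + n) m ≠ 0) (hn : gammaProd (z + m) n ≠ 0) :
    gammaProd z m / gammaProd (z + n) m = gammaProd z n / gammaProd (z + m) n := by
  rw [div_eq_div_iff hm hn, ← gammaProd_add, ← gammaProd_add, add_comm]

lemma Sel_eq_gammaProd (k : ℕ) (α β : ℂ) :
    Sel k α β = gammaProd α k * gammaProd β k * gammaProd 1 k / gammaProd (α + β + k) k := by
  unfold Sel gammaProd
  rw [← prod_mul_distrib, ← prod_mul_distrib, ← prod_div_distrib]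
  refine prod_congr rfl fun j _ => ?_
  ring_nf

lemma Mor_eq_gammaProd (k : ℕ) (α β : ℂ) :
    Mor k α β = (2 * (Real.pi : ℂ)) ^ k *
      (gammaProd (α + β) k * gammaProd 1 k / (gammaProd α k * gammaProd β k)) := by
  unfold Mor gammaProd
  rw [← prod_mul_distrib, ← prod_mul_distrib, ← prod_div_distrib]
  congr 1
  refine prod_congr rfl fun j _ => ?_
  ring_nf

lemma Sel_div_Sel_add (k : ℕ) (α β w : ℂ) (hα : gammaProd α k ≠ 0) :
    Sel k α β / Sel k α (β + w) =
      (gammaProd β k / gammaProd (β + w) k) /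
        (gammaProd (α + β + k) k / gammaProd (α + β + k + w) k) := by
  have h1 := gammaProd_one_ne_zero k
  rw [Sel_eq_gammaProd, Sel_eq_gammaProd, show α + (β + w) + k = α + β + k + w by ring]
  field_simp

lemma Mor_add_div_Mor (k : ℕ) (α β w : ℂ) (hβ : gammaProd β k ≠ 0) :
    Mor k (α + w) β / Mor k α β =
      (gammaProd α k / gammaProd (α + w) k) /
        (gammaProd (α + β) k / gammaProd (α + β + w) k) := by
  have h1 := gammaProd_one_ne_zero k
  have hπ : (2 * (Real.pi : ℂ)) ^ k ≠ 0 := by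
    simp [Real.pi_ne_zero]
  rw [Mor_eq_gammaProd, Mor_eq_gammaProd, show α + w + β = α + β + w by ring]
  field_simp

theorem selberg_morris_identity₂_general (m N : ℕ) (η₁ η₂ : ℂ)
    (h1 : ∀ j ∈ Finset.range m,
      Complex.Gamma (η₂ - m + j + 1) ≠ 0 ∧ Complex.Gamma (η₁ + j + 1) ≠ 0 ∧
      Complex.Gamma (η₁ + N + j + 1) ≠ 0 ∧ Complex.Gamma (η₁ + η₂ + j + 1) ≠ 0 ∧
      Complex.Gamma (η₁ + η₂ + N + j + 1) ≠ 0)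
    (h2 : ∀ j ∈ Finset.range N,
      Complex.Gamma (η₁ + m + j + 1) ≠ 0 ∧ Complex.Gamma (η₁ + j + 1) ≠ 0 ∧
      Complex.Gamma (η₂ + j + 1) ≠ 0 ∧ Complex.Gamma (η₁ + η₂ + j + 1) ≠ 0 ∧
      Complex.Gamma (η₁ + η₂ + m + j + 1) ≠ 0) :
    Sel m (η₂ - m) η₁ / Sel m (η₂ - m) (η₁ + N)
      = Mor N (η₁ + m) η₂ / Mor N η₁ η₂ := by
  rw [Sel_div_Sel_add m _ _ _ (gammaProd_ne_zero fun j hj => (h1 j hj).1),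
    Mor_add_div_Mor N _ _ _ (gammaProd_ne_zero fun j hj => (h2 j hj).2.2.1),
    show η₂ - m + η₁ + m = η₁ + η₂ by ring,
    gammaProd_div_gammaProd_comm η₁ m N (gammaProd_ne_zero fun j hj => (h1 j hj).2.2.1)
      (gammaProd_ne_zero fun j hj => (h2 j hj).1),
    gammaProd_div_gammaProd_comm (η₁ + η₂) m N
      (gammaProd_ne_zero fun j hj => (h1 j hj).2.2.2.2)
      (gammaProd_ne_zero fun j hj => (h2 j hj).2.2.2.2)]

/-- `S_m(η₂-m, η₁)/S_m(η₂-m, η₁+N) = M_N(η₁+m, η₂)/M_N(η₁, η₂)`,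
for parameters where all Gamma factors are nonzero. -/
theorem selberg_morris_identity₂ (m N : ℕ) (hm : 1 ≤ m) (hN : 1 ≤ N) (η₁ η₂ : ℂ)
    (h1 : ∀ j ∈ Finset.range m,
      Complex.Gamma (η₂ - m + j + 1) ≠ 0 ∧ Complex.Gamma (η₁ + j + 1) ≠ 0 ∧
      Complex.Gamma (η₁ + N + j + 1) ≠ 0 ∧ Complex.Gamma (η₁ + η₂ + j + 1) ≠ 0 ∧
      Complex.Gamma (η₁ + η₂ + N + j + 1) ≠ 0)
    (h2 : ∀ j ∈ Finset.range N,
      Complex.Gamma (η₁ + m + j + 1) ≠ 0 ∧ Complex.Gamma (η₁ + j + 1) ≠ 0 ∧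
      Complex.Gamma (η₂ + j + 1) ≠ 0 ∧ Complex.Gamma (η₁ + η₂ + j + 1) ≠ 0 ∧
      Complex.Gamma (η₁ + η₂ + m + j + 1) ≠ 0) :
    Sel m (η₂ - m) η₁ / Sel m (η₂ - m) (η₁ + N)
      = Mor N (η₁ + m) η₂ / Mor N η₁ η₂ :=
  selberg_morris_identity₂_general m N η₁ η₂ h1 h2
end

section
/- For real numbers b > a > 0 with x ∈ (a,b) fixed, the principal-value integral ⨍_a^b (1/y) √((b−y)(y−a))/(x−y) dy equals π (1 − √(ab)/x). -/
/-!
Partial fractions split the integrand as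
`√((b-y)(y-a)) / (y(x-y)) = 1/r - (ab/x) / (y r) + ((b-x)(x-a)/x) / ((x-y) r)`
with `r = √((b-y)(y-a))`, and each term has an elementary primitive: `arcsin ((2y-a-b)/(b-a))`,
`arcsin (((a+b)y-2ab)/((b-a)y))` and a logarithm whose only singularity is `log |y - x|`.
Being even about `x`, that singularity cancels in the principal value, so the limit is the
increment of the primitive over `[a, b]`, where both arcsines run from `-π/2` to `π/2`.
-/

open Real Filter Set Topology

theorem HasDerivAt.arcsin_of_one_sub_sq_eq {f : ℝ → ℝ} {f' w y : ℝ}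
    (hf : HasDerivAt f f' y) (hw : 0 < w) (hfw : 1 - f y ^ 2 = w ^ 2) :
    HasDerivAt (fun t => arcsin (f t)) (f' / w) y := by
  have hlt : f y ^ 2 < 1 := by nlinarith
  have hne : f y ≠ -1 ∧ f y ≠ 1 := by
    constructor <;> rintro h <;> rw [h] at hlt <;> norm_num at hlt
  have h := (hasDerivAt_arcsin hne.1 hne.2).comp y hf
  rw [hfw, sqrt_sq hw.le, one_div, ← div_eq_inv_mul] at h
  exact h

section Primitive

variable {a b x y : ℝ}

theorem sqrt_mul_sub_pos (hay : a < y) (hyb : y < b) : 0 < √((b - y) * (y - a)) :=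
  sqrt_pos.2 (mul_pos (sub_pos.2 hyb) (sub_pos.2 hay))

theorem sq_sqrt_mul_sub (hay : a ≤ y) (hyb : y ≤ b) :
    √((b - y) * (y - a)) ^ 2 = (b - y) * (y - a) :=
  sq_sqrt (mul_nonneg (sub_nonneg.2 hyb) (sub_nonneg.2 hay))

theorem hasDerivAt_arcsin_affine (hay : a < y) (hyb : y < b) :
    HasDerivAt (fun t => arcsin ((2 * t - a - b) / (b - a))) (1 / √((b - y) * (y - a))) y := by
  have hba : b - a ≠ 0 := by linarith
  have hu : HasDerivAt (fun t => (2 * t - a - b) / (b - a)) (2 / (b - a)) y := by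
    simpa using ((((hasDerivAt_id y).const_mul 2).sub_const a).sub_const b).div_const (b - a)
  refine (hu.arcsin_of_one_sub_sq_eq (w := 2 * √((b - y) * (y - a)) / (b - a))
    (div_pos (by positivity) (by linarith)) ?_).congr_deriv (by field_simp)
  field_simp
  linear_combination (-4) * sq_sqrt_mul_sub hay.le hyb.le

theorem hasDerivAt_arcsin_moebius (ha : 0 < a) (hay : a < y) (hyb : y < b) :
    HasDerivAt (fun t => arcsin (((a + b) * t - 2 * a * b) / ((b - a) * t)))
      (√(a * b) / (y * √((b - y) * (y - a)))) y := by
  have hba : 0 < b - a := by linarith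
  have hy : 0 < y := ha.trans hay
  have hr := sqrt_mul_sub_pos hay hyb
  have hs : 0 < √(a * b) := sqrt_pos.2 (by nlinarith)
  have hs2 : √(a * b) ^ 2 = a * b := sq_sqrt (by nlinarith)
  have hv : HasDerivAt (fun t => ((a + b) * t - 2 * a * b) / ((b - a) * t))
      (2 * a * b / ((b - a) * y ^ 2)) y := by
    have hn := ((hasDerivAt_id y).const_mul (a + b)).sub_const (2 * a * b)
    have hd := (hasDerivAt_id y).const_mul (b - a)
    refine (hn.div hd (by positivity)).congr_deriv ?_
    simp only [id]
    field_simp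
    ring
  refine (hv.arcsin_of_one_sub_sq_eq (w := 2 * √(a * b) * √((b - y) * (y - a)) / ((b - a) * y))
    (by positivity) ?_).congr_deriv ?_
  · field_simp
    linear_combination (4 * (b - y) * (y - a) - 8 * √((b - y) * (y - a)) ^ 2) * hs2
      + (4 * √(a * b) ^ 2 - 8 * a * b) * sq_sqrt_mul_sub hay.le hyb.le
  · field_simp
    linear_combination (-1 : ℝ) * hs2

noncomputable def pvLogArg (a b x y : ℝ) : ℝ :=
  (b - y) * (x - a) + (y - a) * (b - x) + 2 * √((b - x) * (x - a)) * √((b - y) * (y - a))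

theorem pvLogArg_pos (hax : a < x) (hxb : x < b) (hay : a ≤ y) (hyb : y ≤ b) :
    0 < pvLogArg a b x y := by
  have : 0 < (b - y) * (x - a) + (y - a) * (b - x) := by
    nlinarith [mul_nonneg (sub_nonneg.2 hyb) (sub_pos.2 hax).le,
      mul_nonneg (sub_nonneg.2 hay) (sub_pos.2 hxb).le, mul_pos (sub_pos.2 hax) (sub_pos.2 hxb)]
  unfold pvLogArg
  positivity

theorem hasDerivAt_log_pvLogArg_sub_log (hax : a < x) (hxb : x < b) (hay : a < y) (hyb : y < b)
    (hyx : y ≠ x) :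
    HasDerivAt (fun t => log (pvLogArg a b x t) - log (t - x))
      (√((b - x) * (x - a)) / ((x - y) * √((b - y) * (y - a)))) y := by
  have hr := sqrt_mul_sub_pos hay hyb
  have hg := pvLogArg_pos hax hxb hay.le hyb.le
  have hq : HasDerivAt (fun t => (b - t) * (t - a)) (-1 * (y - a) + (b - y) * 1) y :=
    ((hasDerivAt_id y).const_sub b).mul ((hasDerivAt_id y).sub_const a)
  have hlin : HasDerivAt (fun t => (b - t) * (x - a) + (t - a) * (b - x))
      (-1 * (x - a) + 1 * (b - x)) y :=
    (((hasDerivAt_id y).const_sub b).mul_const (x - a)).add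
      (((hasDerivAt_id y).sub_const a).mul_const (b - x))
  have hr' := hq.sqrt (mul_pos (sub_pos.2 hyb) (sub_pos.2 hay)).ne'
  set r := √((b - y) * (y - a))
  set p := √((b - x) * (x - a))
  refine (((hlin.add (hr'.const_mul (2 * p))).log hg.ne').sub
    (((hasDerivAt_id y).sub_const x).log (sub_ne_zero.2 hyx))).congr_deriv ?_
  have hkey : (r * ((b - x) - (x - a)) + p * ((b - y) - (y - a))) * (y - x)
      = (r - p) * pvLogArg a b x y := by
    unfold pvLogArg
    linear_combination (-2 * p) * sq_sqrt_mul_sub hay.le hyb.le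
      + (2 * r) * sq_sqrt_mul_sub hax.le hxb.le
  simp only [Pi.add_apply, id]
  rw [show (b - y) * (x - a) + (y - a) * (b - x) + 2 * p * r = pvLogArg a b x y from rfl]
  field_simp
  linear_combination (x - y) * hkey

noncomputable def pvPrimitiveRegular (a b x y : ℝ) : ℝ :=
  arcsin ((2 * y - a - b) / (b - a))
    - √(a * b) / x * arcsin (((a + b) * y - 2 * a * b) / ((b - a) * y))
    + √((b - x) * (x - a)) / x * log (pvLogArg a b x y)

/-- Since `log (y - x) = log |y - x|`, this is a primitive on both sides of the singularity `x`. -/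
noncomputable def pvPrimitive (a b x y : ℝ) : ℝ :=
  pvPrimitiveRegular a b x y - √((b - x) * (x - a)) / x * log (y - x)

theorem integrand_eq_partial_fractions (ha : 0 < a) (hax : a ≤ x) (hxb : x ≤ b) (hay : a < y)
    (hyb : y < b) (hyx : y ≠ x) :
    √((b - y) * (y - a)) / (y * (x - y))
      = 1 / √((b - y) * (y - a))
        - √(a * b) / x * (√(a * b) / (y * √((b - y) * (y - a))))
        + √((b - x) * (x - a)) / x
          * (√((b - x) * (x - a)) / ((x - y) * √((b - y) * (y - a)))) := by
  have hr := sqrt_mul_sub_pos hay hyb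
  have hx : 0 < x := ha.trans_le hax
  have hy : 0 < y := ha.trans hay
  field_simp
  rw [sq_sqrt_mul_sub hay.le hyb.le, sq_sqrt_mul_sub hax hxb,
    sq_sqrt (mul_pos (hy.trans hyb) ha).le]
  ring

theorem hasDerivAt_pvPrimitive (ha : 0 < a) (hax : a < x) (hxb : x < b) (hay : a < y)
    (hyb : y < b) (hyx : y ≠ x) :
    HasDerivAt (pvPrimitive a b x) (√((b - y) * (y - a)) / (y * (x - y))) y := by
  rw [integrand_eq_partial_fractions ha hax.le hxb.le hay hyb hyx]
  refine (((hasDerivAt_arcsin_affine hay hyb).sub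
    ((hasDerivAt_arcsin_moebius ha hay hyb).const_mul (√(a * b) / x))).add
    ((hasDerivAt_log_pvLogArg_sub_log hax hxb hay hyb hyx).const_mul
      (√((b - x) * (x - a)) / x))).congr_of_eventuallyEq (Eventually.of_forall fun t => ?_)
  simp only [pvPrimitive, pvPrimitiveRegular, Pi.add_apply, Pi.sub_apply]
  ring

theorem continuousOn_pvPrimitiveRegular (ha : 0 < a) (hax : a < x) (hxb : x < b) :
    ContinuousOn (pvPrimitiveRegular a b x) (Icc a b) := by
  have hmoebius : ContinuousOn (fun y => ((a + b) * y - 2 * a * b) / ((b - a) * y)) (Icc a b) :=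
    ContinuousOn.div (by fun_prop) (by fun_prop) fun y hy =>
      mul_ne_zero (sub_pos.2 (hax.trans hxb)).ne' (ha.trans_le hy.1).ne'
  unfold pvPrimitiveRegular
  refine (continuous_arcsin.comp_continuousOn (by fun_prop)).sub
    (continuousOn_const.mul (continuous_arcsin.comp_continuousOn hmoebius)) |>.add
    (continuousOn_const.mul (ContinuousOn.log ?_ fun y hy =>
      (pvLogArg_pos hax hxb hy.1 hy.2).ne'))
  unfold pvLogArg
  fun_prop

theorem continuousOn_pvPrimitive (ha : 0 < a) (hax : a < x) (hxb : x < b) :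
    ContinuousOn (pvPrimitive a b x) (Icc a b \ {x}) :=
  ((continuousOn_pvPrimitiveRegular ha hax hxb).mono sdiff_subset).sub
    (continuousOn_const.mul (ContinuousOn.log (by fun_prop) fun _ hy => sub_ne_zero.2 hy.2))

theorem integral_eq_pvPrimitive_sub (ha : 0 < a) (hax : a < x) (hxb : x < b) {c d : ℝ}
    (hcd : c ≤ d) (hac : a ≤ c) (hdb : d ≤ b) (hx : x ∉ Icc c d) :
    ∫ y in c..d, √((b - y) * (y - a)) / (y * (x - y))
      = pvPrimitive a b x d - pvPrimitive a b x c := by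
  have hsub : Icc c d ⊆ Icc a b \ {x} := fun y hy =>
    ⟨⟨hac.trans hy.1, hy.2.trans hdb⟩, fun h => hx (h ▸ hy)⟩
  refine intervalIntegral.integral_eq_sub_of_hasDerivAt_of_le hcd
    ((continuousOn_pvPrimitive ha hax hxb).mono hsub) (fun y hy => ?_) ?_
  · exact hasDerivAt_pvPrimitive ha hax hxb (hac.trans_lt hy.1) (hy.2.trans_le hdb)
      (hsub (Ioo_subset_Icc_self hy)).2
  refine ContinuousOn.intervalIntegrable ?_
  rw [uIcc_of_le hcd]
  exact ContinuousOn.div (by fun_prop) (by fun_prop) fun y hy =>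
    mul_ne_zero (ha.trans_le (hac.trans hy.1)).ne' (sub_ne_zero.2 fun h => hx (h ▸ hy))

theorem pvPrimitive_right_sub_left (ha : 0 < a) (hax : a < x) (hxb : x < b) :
    pvPrimitive a b x b - pvPrimitive a b x a = π * (1 - √(a * b) / x) := by
  have hba : b - a ≠ 0 := (sub_pos.2 (hax.trans hxb)).ne'
  have hb : b ≠ 0 := (ha.trans (hax.trans hxb)).ne'
  have hbx : b - x ≠ 0 := (sub_pos.2 hxb).ne'
  have hxa : x - a ≠ 0 := (sub_pos.2 hax).ne'
  have hlog_b : log (pvLogArg a b x b) - log (b - x) = log (b - a) := by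
    rw [show pvLogArg a b x b = (b - a) * (b - x) by simp [pvLogArg],
      log_mul hba hbx, add_sub_cancel_right]
  have hlog_a : log (pvLogArg a b x a) - log (a - x) = log (b - a) := by
    rw [show pvLogArg a b x a = (b - a) * (x - a) by simp [pvLogArg],
      log_mul hba hxa, ← neg_sub x a, log_neg_eq_log, add_sub_cancel_right]
  calc pvPrimitive a b x b - pvPrimitive a b x a
      = (arcsin ((2 * b - a - b) / (b - a)) - arcsin ((2 * a - a - b) / (b - a)))
        - √(a * b) / x * (arcsin (((a + b) * b - 2 * a * b) / ((b - a) * b))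
          - arcsin (((a + b) * a - 2 * a * b) / ((b - a) * a)))
        + √((b - x) * (x - a)) / x * ((log (pvLogArg a b x b) - log (b - x))
          - (log (pvLogArg a b x a) - log (a - x))) := by
        simp only [pvPrimitive, pvPrimitiveRegular]
        ring
    _ = (arcsin 1 - arcsin (-1)) - √(a * b) / x * (arcsin 1 - arcsin (-1)) := by
        rw [hlog_b, hlog_a, sub_self, mul_zero, add_zero]
        congr 4 <;> field_simp <;> ring
    _ = π * (1 - √(a * b) / x) := by
        rw [arcsin_one, arcsin_neg_one]
        ring

end Primitive

theorem pv_integral_eval_general (a b x : ℝ) (ha : 0 < a) (hx : x ∈ Set.Ioo a b) :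
    Filter.Tendsto
      (fun ε : ℝ =>
        (∫ y in a..(x - ε), Real.sqrt ((b - y) * (y - a)) / (y * (x - y)))
          + ∫ y in (x + ε)..b, Real.sqrt ((b - y) * (y - a)) / (y * (x - y)))
      (nhdsWithin 0 (Set.Ioi 0))
      (nhds (π * (1 - Real.sqrt (a * b) / x))) := by
  obtain ⟨hax, hxb⟩ := hx
  set K := pvPrimitiveRegular a b x
  have hK : ContinuousAt K x :=
    (continuousOn_pvPrimitiveRegular ha hax hxb).continuousAt (Icc_mem_nhds hax hxb)
  have hsym : Tendsto (fun ε => K (x - ε) - K (x + ε)) (𝓝[>] 0) (𝓝 0) := by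
    have hcont : ContinuousAt (fun ε => K (x - ε) - K (x + ε)) 0 :=
      (hK.comp_of_eq (by fun_prop) (sub_zero x)).sub (hK.comp_of_eq (by fun_prop) (add_zero x))
    simpa using hcont.tendsto.mono_left nhdsWithin_le_nhds
  rw [← pvPrimitive_right_sub_left ha hax hxb]
  refine Tendsto.congr' ?_
    (by simpa using hsym.add_const (pvPrimitive a b x b - pvPrimitive a b x a))
  filter_upwards [Ioo_mem_nhdsGT (lt_min (sub_pos.2 hax) (sub_pos.2 hxb))] with ε hε
  obtain ⟨hε0, hεa, hεb⟩ : 0 < ε ∧ ε < x - a ∧ ε < b - x :=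
    ⟨hε.1, lt_min_iff.1 hε.2⟩
  rw [integral_eq_pvPrimitive_sub ha hax hxb (by linarith) le_rfl (by linarith)
      fun h => by linarith [h.2],
    integral_eq_pvPrimitive_sub ha hax hxb (by linarith) (by linarith) le_rfl
      fun h => by linarith [h.1]]
  simp only [pvPrimitive]
  rw [show x - ε - x = -ε by ring, show x + ε - x = ε by ring, log_neg_eq_log]
  ring

/-- For `0 < a < b` and `x ∈ (a,b)`, the principal value integral
`⨍_a^b (1/y)√((b-y)(y-a))/(x-y) dy = π(1 - √(ab)/x)`. -/
theorem pv_integral_eval (a b x : ℝ) (ha : 0 < a) (hab : a < b) (hx : x ∈ Set.Ioo a b) :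
    Filter.Tendsto
      (fun ε : ℝ =>
        (∫ y in a..(x - ε), Real.sqrt ((b - y) * (y - a)) / (y * (x - y)))
          + ∫ y in (x + ε)..b, Real.sqrt ((b - y) * (y - a)) / (y * (x - y)))
      (nhdsWithin 0 (Set.Ioi 0))
      (nhds (π * (1 - Real.sqrt (a * b) / x))) :=
  pv_integral_eval_general a b x ha hx
end

section
/- For real b > a > 0 and t ∈ ℝ, ∫_a^b (t log x / x) √((x−a)/(b−x)) dx = 2πt [ log((√a + √b)/2) + (√a/√b) log((√a + √b)/(2√(ab))) ]. -/
/-!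
Since `√((x-a)/(b-x)) = (x-a)/√((x-a)(b-x))`, the integral splits into `∫ log x / √((x-a)(b-x))`
and `a ∫ log x / (x √((x-a)(b-x)))`. The substitution `x = (a+b)/2 - (b-a)/2 cos θ` turns the
first into `∫_0^π log (R² + s² - 2Rs cos θ) dθ` with `R = (√a+√b)/2`, `s = (√b-√a)/2`, which is
`2π log R` because the mean of `log |z - s|` over the circle `|z| = R ≥ |s|` is `log R`.
The inversion `x ↦ ab/x` reduces the second integral to the first.
-/

open Real MeasureTheory Set

theorem integral_log_sq_add_sq_sub_mul_cos {R s : ℝ} (hs : |s| ≤ |R|) :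
    ∫ θ in 0..2 * π, log (R ^ 2 + s ^ 2 - 2 * R * s * cos θ) = 4 * π * log R := by
  have hnorm (θ : ℝ) :
      ‖circleMap 0 R θ - s‖ ^ 2 = R ^ 2 + s ^ 2 - 2 * R * s * cos θ := by
    rw [← Complex.normSq_eq_norm_sq, Complex.normSq_apply]
    simp only [circleMap_zero, Complex.sub_re, Complex.sub_im, Complex.re_ofReal_mul,
      Complex.im_ofReal_mul, Complex.exp_ofReal_mul_I_re, Complex.exp_ofReal_mul_I_im,
      Complex.ofReal_re, Complex.ofReal_im]
    linear_combination R ^ 2 * sin_sq_add_cos_sq θ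
  have h := circleAverage_log_norm_sub_const_of_mem_closedBall (c := 0) (R := R) (a := (s : ℂ))
    (by simpa using hs)
  simp_rw [← hnorm, log_pow, intervalIntegral.integral_const_mul]
  rw [circleAverage_def, smul_eq_mul] at h
  field_simp at h
  push_cast
  linarith

theorem integral_comp_cos_zero_two_pi_eq_two_mul {f : ℝ → ℝ}
    (hf : IntervalIntegrable (fun θ => f (cos θ)) volume 0 π) :
    ∫ θ in 0..2 * π, f (cos θ) = 2 * ∫ θ in 0..π, f (cos θ) := by
  have hreflect := hf.comp_sub_left (2 * π)
  have hsymm :=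
    intervalIntegral.integral_comp_sub_left (fun θ => f (cos θ)) (2 * π) (a := 0) (b := π)
  simp only [cos_two_pi_sub, sub_zero, show 2 * π - π = π by ring] at hreflect hsymm
  rw [← intervalIntegral.integral_add_adjacent_intervals hf hreflect.symm, ← hsymm, two_mul]

theorem integral_log_sq_add_sq_sub_mul_cos_zero_pi {R s : ℝ} (hs : |s| < |R|) :
    ∫ θ in 0..π, log (R ^ 2 + s ^ 2 - 2 * R * s * cos θ) = 2 * π * log R := by
  have hpos (y : ℝ) (hy : y ∈ Icc (-1) 1) : 0 < R ^ 2 + s ^ 2 - 2 * R * s * y := by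
    have : R * s * y ≤ |R| * |s| := by
      calc R * s * y ≤ |R * s * y| := le_abs_self _
        _ ≤ |R| * |s| := by
          rw [abs_mul, abs_mul]; exact mul_le_of_le_one_right (by positivity) (abs_le.2 hy)
    nlinarith [sq_abs R, sq_abs s, abs_nonneg s]
  have hcont : Continuous fun θ => log (R ^ 2 + s ^ 2 - 2 * R * s * cos θ) :=
    (by fun_prop : Continuous fun θ => R ^ 2 + s ^ 2 - 2 * R * s * cos θ).log
      fun θ => (hpos _ (cos_mem_Icc θ)).ne'
  have := integral_comp_cos_zero_two_pi_eq_two_mul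
    (f := fun y => log (R ^ 2 + s ^ 2 - 2 * R * s * y)) (hcont.intervalIntegrable 0 π)
  rw [integral_log_sq_add_sq_sub_mul_cos hs.le] at this
  linarith

noncomputable def chebyshevSubst (a b θ : ℝ) : ℝ := (a + b) / 2 - (b - a) / 2 * cos θ

variable {a b : ℝ}

theorem hasDerivAt_chebyshevSubst (θ : ℝ) :
    HasDerivAt (chebyshevSubst a b) ((b - a) / 2 * sin θ) θ := by
  unfold chebyshevSubst
  simpa using ((hasDerivAt_cos θ).const_mul ((b - a) / 2)).const_sub ((a + b) / 2)

theorem continuous_chebyshevSubst : Continuous (chebyshevSubst a b) := by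
  unfold chebyshevSubst; fun_prop

theorem chebyshevSubst_mem_Icc (hab : a ≤ b) (θ : ℝ) : chebyshevSubst a b θ ∈ Icc a b := by
  unfold chebyshevSubst
  constructor <;> nlinarith [neg_one_le_cos θ, cos_le_one θ]

theorem image_chebyshevSubst_Ioo (hab : a < b) : chebyshevSubst a b '' Ioo 0 π = Ioo a b := by
  have hcos : cos '' Ioo 0 π = Ioo (-1) 1 := by
    simpa using cosPartialHomeomorph.image_source_eq_target
  have : chebyshevSubst a b = (fun y => (b - a) / 2 * y + (a + b) / 2) ∘ Neg.neg ∘ cos := by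
    ext θ; simp only [chebyshevSubst, Function.comp]; ring
  rw [this, image_comp, image_comp, hcos, image_neg_Ioo, neg_neg, image_affine_Ioo (by linarith)]
  congr 1 <;> ring

theorem injOn_chebyshevSubst (hab : a < b) : InjOn (chebyshevSubst a b) (Ioo 0 π) := by
  intro x hx y hy hxy
  apply injOn_cos (Ioo_subset_Icc_self hx) (Ioo_subset_Icc_self hy)
  unfold chebyshevSubst at hxy
  exact mul_left_cancel₀ (by linarith : (b - a) / 2 ≠ 0) (by linarith)

theorem sqrt_sub_mul_sub_chebyshevSubst (hab : a ≤ b) {θ : ℝ} (hθ : θ ∈ Icc 0 π) :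
    √((chebyshevSubst a b θ - a) * (b - chebyshevSubst a b θ)) = (b - a) / 2 * sin θ := by
  rw [← sqrt_sq (mul_nonneg (by linarith) (sin_nonneg_of_nonneg_of_le_pi hθ.1 hθ.2))]
  congr 1
  unfold chebyshevSubst
  linear_combination (-(b - a) ^ 2 / 4) * sin_sq_add_cos_sq θ

theorem eqOn_abs_deriv_smul_div_sqrt_chebyshevSubst (hab : a < b) (g : ℝ → ℝ) :
    EqOn (fun θ => |(b - a) / 2 * sin θ| • (g (chebyshevSubst a b θ) /
        √((chebyshevSubst a b θ - a) * (b - chebyshevSubst a b θ))))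
      (fun θ => g (chebyshevSubst a b θ)) (Ioo 0 π) := by
  intro θ hθ
  have hpos : 0 < (b - a) / 2 * sin θ :=
    mul_pos (by linarith) (sin_pos_of_pos_of_lt_pi hθ.1 hθ.2)
  simp only [smul_eq_mul]
  rw [sqrt_sub_mul_sub_chebyshevSubst hab.le (Ioo_subset_Icc_self hθ), abs_of_pos hpos,
    mul_div_cancel₀ _ hpos.ne']

theorem integrableOn_div_sqrt_iff (hab : a < b) (g : ℝ → ℝ) :
    IntegrableOn (fun x => g x / √((x - a) * (b - x))) (Ioo a b) ↔
      IntegrableOn (fun θ => g (chebyshevSubst a b θ)) (Ioo 0 π) := by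
  rw [← image_chebyshevSubst_Ioo hab, integrableOn_image_iff_integrableOn_abs_deriv_smul
    measurableSet_Ioo (fun θ _ => (hasDerivAt_chebyshevSubst θ).hasDerivWithinAt)
    (injOn_chebyshevSubst hab)]
  exact integrableOn_congr_fun (eqOn_abs_deriv_smul_div_sqrt_chebyshevSubst hab g)
    measurableSet_Ioo

theorem setIntegral_div_sqrt_eq_integral_chebyshevSubst (hab : a < b) (g : ℝ → ℝ) :
    ∫ x in Ioo a b, g x / √((x - a) * (b - x)) = ∫ θ in 0..π, g (chebyshevSubst a b θ) := by
  rw [← image_chebyshevSubst_Ioo hab, integral_image_eq_integral_abs_deriv_smul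
    measurableSet_Ioo (fun θ _ => (hasDerivAt_chebyshevSubst θ).hasDerivWithinAt)
    (injOn_chebyshevSubst hab), intervalIntegral.integral_of_le pi_pos.le,
    integral_Ioc_eq_integral_Ioo]
  exact setIntegral_congr_fun measurableSet_Ioo
    (eqOn_abs_deriv_smul_div_sqrt_chebyshevSubst hab g)

theorem ContinuousOn.integrableOn_div_sqrt {g : ℝ → ℝ} (hab : a < b)
    (hg : ContinuousOn g (Icc a b)) :
    IntegrableOn (fun x => g x / √((x - a) * (b - x))) (Ioo a b) := by
  rw [integrableOn_div_sqrt_iff hab]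
  have : ContinuousOn (fun θ => g (chebyshevSubst a b θ)) (Icc 0 π) :=
    hg.comp continuous_chebyshevSubst.continuousOn fun θ _ => chebyshevSubst_mem_Icc hab.le θ
  exact (this.integrableOn_Icc).mono_set Ioo_subset_Icc_self

theorem setIntegral_one_div_sqrt (hab : a < b) :
    ∫ x in Ioo a b, 1 / √((x - a) * (b - x)) = π := by
  rw [setIntegral_div_sqrt_eq_integral_chebyshevSubst hab (fun _ => 1)]
  simp

theorem setIntegral_Ioo_eq_integral_comp_mul_div (ha : 0 < a) (g : ℝ → ℝ) :
    ∫ x in Ioo a b, g x = ∫ u in Ioo a b, a * b / u ^ 2 * g (a * b / u) := by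
  set φ : ℝ → ℝ := fun u => a * b / u
  have hpos {u : ℝ} (hu : u ∈ Ioo a b) : 0 < u ∧ 0 < b :=
    ⟨ha.trans hu.1, ha.trans (hu.1.trans hu.2)⟩
  have hmaps : MapsTo φ (Ioo a b) (Ioo a b) := fun u hu => by
    obtain ⟨hu0, hb⟩ := hpos hu
    constructor
    · rw [lt_div_iff₀ hu0]; nlinarith [hu.2]
    · rw [div_lt_iff₀ hu0]; nlinarith [hu.1]
  have hinvol {u : ℝ} (hu : u ∈ Ioo a b) : φ (φ u) = u := by
    obtain ⟨hu0, hb⟩ := hpos hu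
    simp only [φ]; field_simp
  have hinj : InjOn φ (Ioo a b) := fun u hu v hv huv => by
    rw [← hinvol hu, huv, hinvol hv]
  have himage : φ '' Ioo a b = Ioo a b :=
    hmaps.image_subset.antisymm fun x hx => ⟨φ x, hmaps hx, hinvol hx⟩
  have hderiv (u : ℝ) (hu : u ∈ Ioo a b) :
      HasDerivWithinAt φ (-(a * b / u ^ 2)) (Ioo a b) u := by
    have := ((hasDerivAt_inv (hpos hu).1.ne').const_mul (a * b)).hasDerivWithinAt (s := Ioo a b)
    simpa [φ, div_eq_mul_inv] using this
  conv_lhs => rw [← himage]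
  rw [integral_image_eq_integral_abs_deriv_smul measurableSet_Ioo hderiv hinj]
  refine setIntegral_congr_fun measurableSet_Ioo fun u hu => ?_
  obtain ⟨hu0, hb⟩ := hpos hu
  rw [abs_neg, abs_of_pos (by positivity), smul_eq_mul]

theorem setIntegral_log_div_sqrt (ha : 0 < a) (hab : a < b) :
    ∫ x in Ioo a b, log x / √((x - a) * (b - x)) = 2 * π * log ((√a + √b) / 2) := by
  have hsa : 0 < √a := sqrt_pos.2 ha
  have hsab : √a < √b := sqrt_lt_sqrt ha.le hab
  have hsq : chebyshevSubst a b = fun θ =>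
      ((√a + √b) / 2) ^ 2 + ((√b - √a) / 2) ^ 2
        - 2 * ((√a + √b) / 2) * ((√b - √a) / 2) * cos θ := by
    ext θ
    rw [chebyshevSubst]
    linear_combination (1 + cos θ) / 2 * (sq_sqrt ha.le).symm
      + (1 - cos θ) / 2 * (sq_sqrt (ha.trans hab).le).symm
  have hs : |(√b - √a) / 2| < |(√a + √b) / 2| := by
    rw [abs_of_pos (by linarith), abs_of_pos (by linarith)]
    linarith
  rw [setIntegral_div_sqrt_eq_integral_chebyshevSubst hab, hsq,
    integral_log_sq_add_sq_sub_mul_cos_zero_pi hs]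

theorem continuousOn_log_Icc (ha : 0 < a) : ContinuousOn log (Icc a b) :=
  continuousOn_log.mono fun _ hx => (ha.trans_le hx.1).ne'

/-- The inversion `x ↦ ab/x` maps the weight `dx / (x √((x-a)(b-x)))` to
`du / (√(ab) √((u-a)(b-u)))`. -/
theorem setIntegral_log_div_self_div_sqrt (ha : 0 < a) (hab : a < b) :
    ∫ x in Ioo a b, log x / x / √((x - a) * (b - x))
      = π * (log (a * b) - 2 * log ((√a + √b) / 2)) / √(a * b) := by
  have hb : 0 < b := ha.trans hab
  have hinv : EqOn
      (fun u => a * b / u ^ 2 *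
        (log (a * b / u) / (a * b / u) / √((a * b / u - a) * (b - a * b / u))))
      (fun u => (log (a * b) * (1 / √((u - a) * (b - u)))
        - log u / √((u - a) * (b - u))) / √(a * b))
      (Ioo a b) := by
    intro u hu
    have hu0 : 0 < u := ha.trans hu.1
    have hD : 0 < (u - a) * (b - u) := mul_pos (by linarith [hu.1]) (by linarith [hu.2])
    have hsqrt :
        √((a * b / u - a) * (b - a * b / u)) = √(a * b) * √((u - a) * (b - u)) / u := by
      rw [← sqrt_sq (by positivity : 0 ≤ √(a * b) * √((u - a) * (b - u)) / u), div_pow, mul_pow,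
        sq_sqrt (by positivity), sq_sqrt hD.le]
      congr 1
      field_simp
    simp only
    rw [hsqrt, log_div (by positivity) hu0.ne']
    field_simp
  rw [setIntegral_Ioo_eq_integral_comp_mul_div ha, setIntegral_congr_fun measurableSet_Ioo hinv,
    integral_div,
    integral_sub ((continuousOn_const.integrableOn_div_sqrt hab).const_mul _)
      ((continuousOn_log_Icc ha).integrableOn_div_sqrt hab),
    integral_const_mul, setIntegral_one_div_sqrt hab, setIntegral_log_div_sqrt ha hab]
  ring

theorem sqrt_div_eq_div_sqrt_mul {u : ℝ} (hu : 0 ≤ u) (v : ℝ) : √(u / v) = u / √(u * v) := by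
  rw [sqrt_div hu, sqrt_mul hu, ← div_div, div_sqrt]

theorem mul_log_div_mul_sqrt_div_eq_sub (t : ℝ) {x : ℝ} (hax : a ≤ x) (hx : x ≠ 0) :
    t * log x / x * √((x - a) / (b - x))
      = t * (log x / √((x - a) * (b - x))) - t * a * (log x / x / √((x - a) * (b - x))) := by
  rw [sqrt_div_eq_div_sqrt_mul (sub_nonneg.2 hax)]
  field_simp

/-- `∫_a^b (t log x / x) √((x-a)/(b-x)) dx
  = 2πt [log((√a+√b)/2) + (√a/√b) log((√a+√b)/(2√(ab)))]` for `0 < a < b`. -/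
theorem log_weight_integral_x (a b t : ℝ) (ha : 0 < a) (hab : a < b) :
    (∫ x in a..b, t * Real.log x / x * Real.sqrt ((x - a) / (b - x)))
      = 2 * π * t *
          (Real.log ((Real.sqrt a + Real.sqrt b) / 2)
            + Real.sqrt a / Real.sqrt b *
                Real.log ((Real.sqrt a + Real.sqrt b) / (2 * Real.sqrt (a * b)))) := by
  have hsplit : EqOn (fun x => t * log x / x * √((x - a) / (b - x)))
      (fun x => t * (log x / √((x - a) * (b - x))) - t * a * (log x / x / √((x - a) * (b - x))))
      (Ioo a b) := fun x hx =>
    mul_log_div_mul_sqrt_div_eq_sub t hx.1.le (ha.trans hx.1).ne'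
  have hint_log := (continuousOn_log_Icc ha).integrableOn_div_sqrt hab
  have hint_log_div := ContinuousOn.integrableOn_div_sqrt (g := fun x => log x / x) hab
    ((continuousOn_log_Icc ha).div continuousOn_id fun _ hx => (ha.trans_le hx.1).ne')
  rw [intervalIntegral.integral_of_le hab.le, integral_Ioc_eq_integral_Ioo,
    setIntegral_congr_fun measurableSet_Ioo hsplit,
    integral_sub (hint_log.const_mul _) (hint_log_div.const_mul _),
    integral_const_mul, integral_const_mul, setIntegral_log_div_sqrt ha hab,
    setIntegral_log_div_self_div_sqrt ha hab]
  have hratio : a / √(a * b) = √a / √b := by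
    rw [sqrt_mul ha.le, ← div_div, div_sqrt]
  have hb : 0 < b := ha.trans hab
  have hlog_ratio :
      log ((√a + √b) / (2 * √(a * b))) = log ((√a + √b) / 2) - log (a * b) / 2 := by
    rw [← div_div, log_div (by positivity) (by positivity), log_sqrt (by positivity)]
  rw [hlog_ratio, ← hratio]
  field_simp
  ring
end

section
/- For real numbers 0 < a < b < 1 and t ∈ ℝ, ∫_a^b (t log x / (1−x)) √((x−a)/(b−x)) dx = 2πt [ log(2/(√a + √b)) + (√(1−a)/√(1−b)) log((√(a(1−b)) + √(b(1−a)))/(√(1−a) + √(1−b))) ]. -/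
/-!
For `x > 0`, `log x / (x - 1) = ∫₀^∞ dc / ((1 + c)(x + c))`, so by Fubini the integral equals
`-π t ∫₀^∞ (1 - √((a + c)/(b + c))) / (1 + c) dc`: the substitution `x = (a + b u²)/(1 + u²)`
turns the inner integral into arctangent integrals, with
`∫_a^b √((x - a)/(b - x)) / (x + c) dx = π (1 - √((a + c)/(b + c)))`.
The substitution `u = √((a + c)/(b + c))` makes the outer integral rational, and it integrates to
logarithms; these collapse to the closed form through the factorisation
`(√(b(1-a)) + √(a(1-b)))(√(b(1-a)) - √(a(1-b))) = b - a = (√(1-a) + √(1-b))(√(1-a) - √(1-b))`.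
-/

open Real MeasureTheory Set Filter Topology

lemma inv_add_mul_sq_eq {A B : ℝ} (hA : 0 < A) (hB : 0 ≤ B) (u : ℝ) :
    (A + B * u ^ 2)⁻¹ = A⁻¹ * (1 + (√(B / A) * u) ^ 2)⁻¹ := by
  rw [mul_pow, sq_sqrt (div_nonneg hB hA.le), ← mul_inv]
  congr 1
  field_simp

lemma integrable_inv_add_mul_sq {A B : ℝ} (hA : 0 < A) (hB : 0 < B) :
    Integrable fun u : ℝ ↦ (A + B * u ^ 2)⁻¹ := by
  simp_rw [inv_add_mul_sq_eq hA hB.le]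
  exact (integrable_inv_one_add_sq.comp_mul_left' (sqrt_pos.2 (div_pos hB hA)).ne').const_mul _

lemma integral_Ioi_inv_add_mul_sq {A B : ℝ} (hA : 0 < A) (hB : 0 < B) :
    ∫ u in Ioi 0, (A + B * u ^ 2)⁻¹ = π / (2 * √(A * B)) := by
  have hk : 0 < √(B / A) := sqrt_pos.2 (div_pos hB hA)
  simp_rw [inv_add_mul_sq_eq hA hB.le]
  rw [integral_const_mul, integral_comp_mul_left_Ioi (fun u ↦ (1 + u ^ 2)⁻¹) 0 hk, mul_zero,
    integral_Ioi_inv_one_add_sq, arctan_zero, sub_zero, smul_eq_mul, sqrt_div' _ hA.le,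
    sqrt_mul hA.le]
  set s := √A with hs
  have := sqrt_pos.2 hA
  have := sqrt_pos.2 hB
  rw [← mul_self_sqrt hA.le, ← hs]
  field_simp

lemma hasDerivAt_div_one_add_sq (a b u : ℝ) :
    HasDerivAt (fun u : ℝ ↦ (a + b * u ^ 2) / (1 + u ^ 2))
      (2 * u * (b - a) / (1 + u ^ 2) ^ 2) u := by
  refine ((((hasDerivAt_pow 2 u).const_mul b).const_add a).div
    ((hasDerivAt_pow 2 u).const_add 1) (by positivity)).congr_deriv ?_
  field_simp
  ring

lemma injOn_div_one_add_sq {a b : ℝ} (hab : a ≠ b) :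
    InjOn (fun u : ℝ ↦ (a + b * u ^ 2) / (1 + u ^ 2)) (Ioi 0) := by
  intro u (hu : 0 < u) v (hv : 0 < v) huv
  rw [div_eq_div_iff (by positivity) (by positivity)] at huv
  have : (b - a) * (u ^ 2 - v ^ 2) = 0 := by linear_combination huv
  have : u ^ 2 = v ^ 2 :=
    sub_eq_zero.1 ((mul_eq_zero.1 this).resolve_left (sub_ne_zero.2 hab.symm))
  exact (pow_left_inj₀ hu.le hv.le two_ne_zero).1 this

lemma image_Ioi_div_one_add_sq {a b : ℝ} (hab : a < b) :
    (fun u : ℝ ↦ (a + b * u ^ 2) / (1 + u ^ 2)) '' Ioi 0 = Ioo a b := by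
  ext x
  constructor
  · rintro ⟨u, hu, rfl⟩
    have : 0 < u ^ 2 := pow_pos hu 2
    dsimp only
    constructor
    · rw [lt_div_iff₀ (by positivity)]; nlinarith
    · rw [div_lt_iff₀ (by positivity)]; nlinarith
  · rintro ⟨hax, hxb⟩
    have hq : 0 < (x - a) / (b - x) := div_pos (by linarith) (by linarith)
    refine ⟨√((x - a) / (b - x)), sqrt_pos.2 hq, ?_⟩
    simp only [sq_sqrt hq.le]
    have : b - x ≠ 0 := by linarith
    have : b - a ≠ 0 := by linarith
    field_simp
    ring

theorem integral_Ioo_sqrt_div_sub_div_add {a b c : ℝ} (hab : a < b) (hac : 0 < a + c) :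
    ∫ x in Ioo a b, √((x - a) / (b - x)) / (x + c) = π * (1 - √((a + c) / (b + c))) := by
  have hbc : 0 < b + c := by linarith
  rw [← image_Ioi_div_one_add_sq hab, integral_image_eq_integral_abs_deriv_smul
    measurableSet_Ioi (fun u _ ↦ (hasDerivAt_div_one_add_sq a b u).hasDerivWithinAt)
    (injOn_div_one_add_sq hab.ne)]
  have hintegrand : ∀ u ∈ Ioi (0 : ℝ), |2 * u * (b - a) / (1 + u ^ 2) ^ 2| •
      (√(((a + b * u ^ 2) / (1 + u ^ 2) - a) / (b - (a + b * u ^ 2) / (1 + u ^ 2)))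
        / ((a + b * u ^ 2) / (1 + u ^ 2) + c))
      = 2 * (1 + u ^ 2)⁻¹ - 2 * (a + c) * ((a + c) + (b + c) * u ^ 2)⁻¹ := by
    intro u (hu : 0 < u)
    have hba : 0 < b - a := by linarith
    have h1 : (a + b * u ^ 2) / (1 + u ^ 2) - a = (b - a) * u ^ 2 / (1 + u ^ 2) := by
      field_simp; ring
    have h2 : b - (a + b * u ^ 2) / (1 + u ^ 2) = (b - a) / (1 + u ^ 2) := by
      field_simp; ring
    have h3 :
        (a + b * u ^ 2) / (1 + u ^ 2) + c = ((a + c) + (b + c) * u ^ 2) / (1 + u ^ 2) := by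
      field_simp; ring
    have : 0 < a + c + (b + c) * u ^ 2 := by positivity
    rw [h1, h2, h3, div_div_div_cancel_right₀ (by positivity), mul_div_cancel_left₀ _ hba.ne',
      sqrt_sq hu.le, abs_of_pos (by positivity), smul_eq_mul]
    field_simp
    ring
  rw [setIntegral_congr_fun measurableSet_Ioi hintegrand, integral_sub
    (integrable_inv_one_add_sq.const_mul 2).integrableOn
    ((integrable_inv_add_mul_sq hac hbc).const_mul _).integrableOn, integral_const_mul,
    integral_const_mul, integral_Ioi_inv_one_add_sq, arctan_zero, sub_zero,
    integral_Ioi_inv_add_mul_sq hac hbc, sqrt_mul hac.le, sqrt_div' _ hbc.le]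
  set s := √(a + c) with hs
  have := sqrt_pos.2 hac
  have := sqrt_pos.2 hbc
  rw [← mul_self_sqrt hac.le, ← hs]
  field_simp

lemma hasDerivAt_log_div_one_add {x c : ℝ} (hx : 0 < x) (hx1 : x ≠ 1) (hc : 0 ≤ c) :
    HasDerivAt (fun c ↦ log ((x + c) / (1 + c)) / (1 - x)) ((1 + c) * (x + c))⁻¹ c := by
  have h1c : 0 < 1 + c := by linarith
  have hxc : 0 < x + c := by linarith
  have hq := ((hasDerivAt_id' c).const_add x).div ((hasDerivAt_id' c).const_add 1) h1c.ne'
  refine (((hasDerivAt_log (div_pos hxc h1c).ne').comp c hq).div_const (1 - x)).congr_deriv ?_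
  have : 1 - x ≠ 0 := sub_ne_zero.2 hx1.symm
  field_simp
  ring

lemma tendsto_log_div_one_add (x : ℝ) :
    Tendsto (fun c ↦ log ((x + c) / (1 + c))) atTop (𝓝 0) := by
  have h : Tendsto (fun c : ℝ ↦ 1 + (x - 1) * (1 + c)⁻¹) atTop (𝓝 1) := by
    simpa using (tendsto_inv_atTop_zero.comp
      (tendsto_atTop_add_const_left _ 1 tendsto_id)).const_mul (x - 1) |>.const_add 1
  rw [← log_one]
  refine ((continuousAt_log one_ne_zero).tendsto.comp h).congr' ?_
  filter_upwards [eventually_gt_atTop 0] with c hc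
  have : 1 + c ≠ 0 := by linarith
  simp only [Function.comp_apply]
  congr 1
  field_simp
  ring

lemma integral_Ioi_inv_mul_add {x : ℝ} (hx : 0 < x) (hx1 : x ≠ 1) :
    ∫ c in Ioi 0, ((1 + c) * (x + c))⁻¹ = log x / (x - 1) := by
  rw [integral_Ioi_of_hasDerivAt_of_nonneg' (fun c hc ↦ hasDerivAt_log_div_one_add hx hx1 hc)
    (fun c (hc : 0 < c) ↦ by positivity)
    (by simpa using (tendsto_log_div_one_add x).div_const (1 - x)),
    add_zero, add_zero, div_one, zero_sub, ← div_neg, neg_sub]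

lemma integrableOn_Ioi_inv_mul_add {x : ℝ} (hx : 0 < x) (hx1 : x ≠ 1) :
    IntegrableOn (fun c ↦ ((1 + c) * (x + c))⁻¹) (Ioi 0) :=
  integrableOn_Ioi_deriv_of_nonneg' (fun c hc ↦ hasDerivAt_log_div_one_add hx hx1 hc)
    (fun c (hc : 0 < c) ↦ by positivity)
    (by simpa using (tendsto_log_div_one_add x).div_const (1 - x))

lemma integrableOn_sqrt_div_sub (a b : ℝ) :
    IntegrableOn (fun x ↦ √((x - a) / (b - x))) (Ioo a b) := by
  rcases le_or_gt b a with hba | hab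
  · simp [Ioo_eq_empty_of_le hba]
  have hrpow : IntegrableOn (fun x ↦ (b - x) ^ (-(1 / 2) : ℝ)) (Ioo a b) := by
    have := ((intervalIntegral.intervalIntegrable_rpow' (a := 0) (b := b - a)
      (by norm_num : -1 < -(1 / 2 : ℝ))).comp_sub_left b).symm
    rw [sub_zero, sub_sub_cancel, intervalIntegrable_iff_integrableOn_Ioo_of_le hab.le] at this
    exact this
  refine (hrpow.const_mul √(b - a)).mono' ?_ ?_
  · exact (continuousOn_of_forall_continuousAt fun x hx ↦ by
      have : b - x ≠ 0 := by linarith [hx.2]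
      fun_prop (disch := assumption)).aestronglyMeasurable measurableSet_Ioo
  · filter_upwards [ae_restrict_mem measurableSet_Ioo] with x ⟨hax, hxb⟩
    have hbx : 0 < b - x := by linarith
    rw [norm_of_nonneg (sqrt_nonneg _), sqrt_div' _ hbx.le, rpow_neg hbx.le, ← sqrt_eq_rpow,
      div_eq_mul_inv]
    gcongr

lemma integrableOn_sqrt_div_sub_mul_log_div {a b : ℝ} (ha : 0 < a) (hb : b < 1) :
    IntegrableOn (fun x ↦ √((x - a) / (b - x)) * (log x / (x - 1))) (Ioo a b) := by
  have hw : IntegrableOn (fun x ↦ √((x - a) / (b - x))) (Icc a b) :=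
    (integrableOn_Icc_iff_integrableOn_Ioo).2 (integrableOn_sqrt_div_sub a b)
  refine (hw.mul_continuousOn (fun x hx ↦ ?_) isCompact_Icc).mono_set Ioo_subset_Icc_self
  have : x ≠ 0 := by linarith [hx.1]
  have : x - 1 ≠ 0 := by linarith [hx.2]
  exact ContinuousAt.continuousWithinAt (by fun_prop (disch := assumption))

lemma integrable_sqrt_div_sub_mul_inv_mul_add {a b : ℝ} (ha : 0 < a) (hb : b < 1) :
    Integrable (Function.uncurry fun x c : ℝ ↦ √((x - a) / (b - x)) * ((1 + c) * (x + c))⁻¹)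
      ((volume.restrict (Ioo a b)).prod (volume.restrict (Ioi 0))) := by
  have hx : ∀ x ∈ Ioo a b, 0 < x ∧ x ≠ 1 := fun x hx ↦ ⟨ha.trans hx.1, (hx.2.trans hb).ne⟩
  refine (integrable_prod_iff (by fun_prop)).2 ⟨?_, ?_⟩
  · filter_upwards [ae_restrict_mem measurableSet_Ioo] with x hx'
    obtain ⟨hx0, hx1⟩ := hx x hx'
    simp only [Function.uncurry_apply_pair]
    exact (integrableOn_Ioi_inv_mul_add hx0 hx1).const_mul _
  · refine (integrableOn_sqrt_div_sub_mul_log_div ha hb).congr_fun (fun x hx' ↦ ?_)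
      measurableSet_Ioo
    obtain ⟨hx0, hx1⟩ := hx x hx'
    simp only [Function.uncurry_apply_pair]
    rw [← integral_Ioi_inv_mul_add hx0 hx1, ← integral_const_mul]
    refine setIntegral_congr_fun measurableSet_Ioi fun c (hc : 0 < c) ↦ ?_
    rw [norm_of_nonneg (by positivity)]

theorem integral_Ioo_sqrt_div_sub_mul_log_div {a b : ℝ} (ha : 0 < a) (hab : a < b) (hb : b < 1) :
    ∫ x in Ioo a b, √((x - a) / (b - x)) * (log x / (x - 1))
      = π * ∫ c in Ioi 0, (1 - √((a + c) / (b + c))) / (1 + c) := by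
  have hx : ∀ x ∈ Ioo a b, 0 < x ∧ x ≠ 1 := fun x hx ↦ ⟨ha.trans hx.1, (hx.2.trans hb).ne⟩
  calc ∫ x in Ioo a b, √((x - a) / (b - x)) * (log x / (x - 1))
      = ∫ x in Ioo a b, ∫ c in Ioi 0, √((x - a) / (b - x)) * ((1 + c) * (x + c))⁻¹ := by
        refine setIntegral_congr_fun measurableSet_Ioo fun x hx' ↦ ?_
        rw [integral_const_mul, integral_Ioi_inv_mul_add (hx x hx').1 (hx x hx').2]
    _ = ∫ c in Ioi 0, ∫ x in Ioo a b, √((x - a) / (b - x)) * ((1 + c) * (x + c))⁻¹ :=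
        integral_integral_swap (integrable_sqrt_div_sub_mul_inv_mul_add ha hb)
    _ = π * ∫ c in Ioi 0, (1 - √((a + c) / (b + c))) / (1 + c) := by
        rw [← integral_const_mul]
        refine setIntegral_congr_fun measurableSet_Ioi fun c (hc : 0 < c) ↦ ?_
        have : 1 + c ≠ 0 := by linarith
        have hsplit (x : ℝ) : √((x - a) / (b - x)) * ((1 + c) * (x + c))⁻¹
            = (1 + c)⁻¹ * (√((x - a) / (b - x)) / (x + c)) := by
          rw [mul_inv]; ring
        simp_rw [hsplit]
        rw [integral_const_mul, integral_Ioo_sqrt_div_sub_div_add hab (by linarith)]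
        field_simp

lemma hasDerivAt_div_one_sub_sq (a b : ℝ) {u : ℝ} (hu : 1 - u ^ 2 ≠ 0) :
    HasDerivAt (fun u : ℝ ↦ (b * u ^ 2 - a) / (1 - u ^ 2))
      (2 * u * (b - a) / (1 - u ^ 2) ^ 2) u := by
  refine ((((hasDerivAt_pow 2 u).const_mul b).sub_const a).div
    ((hasDerivAt_pow 2 u).const_sub 1) hu).congr_deriv ?_
  field_simp
  ring

lemma injOn_div_one_sub_sq {a b : ℝ} (hab : a ≠ b) :
    InjOn (fun u : ℝ ↦ (b * u ^ 2 - a) / (1 - u ^ 2)) (Ioo 0 1) := by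
  intro u ⟨hu0, hu1⟩ v ⟨hv0, hv1⟩ huv
  rw [div_eq_div_iff (by nlinarith) (by nlinarith)] at huv
  have : (b - a) * (u ^ 2 - v ^ 2) = 0 := by linear_combination huv
  have : u ^ 2 = v ^ 2 :=
    sub_eq_zero.1 ((mul_eq_zero.1 this).resolve_left (sub_ne_zero.2 hab.symm))
  exact (pow_left_inj₀ hu0.le hv0.le two_ne_zero).1 this

lemma image_Ioo_div_one_sub_sq {a b : ℝ} (ha : 0 < a) (hab : a < b) :
    (fun u : ℝ ↦ (b * u ^ 2 - a) / (1 - u ^ 2)) '' Ioo √(a / b) 1 = Ioi 0 := by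
  have hb : 0 < b := ha.trans hab
  ext c
  constructor
  · rintro ⟨u, ⟨hu0, hu1⟩, rfl⟩
    have hu : a < b * u ^ 2 := by
      rwa [sqrt_lt' ((sqrt_nonneg _).trans_lt hu0), div_lt_iff₀' hb] at hu0
    have : 0 < u := (sqrt_nonneg _).trans_lt hu0
    exact div_pos (sub_pos.2 hu) (by nlinarith)
  · intro (hc : 0 < c)
    have hq : 0 < (a + c) / (b + c) := by positivity
    refine ⟨√((a + c) / (b + c)), ⟨?_, ?_⟩, ?_⟩
    · refine sqrt_lt_sqrt (by positivity) ?_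
      rw [div_lt_div_iff₀ hb (by positivity)]
      nlinarith
    · rw [sqrt_lt' one_pos, one_pow, div_lt_one (by positivity)]
      linarith
    · simp only [sq_sqrt hq.le]
      have : b + c ≠ 0 := by linarith
      rw [div_eq_iff (sub_pos.2 ((div_lt_one (by positivity)).2 (by linarith))).ne']
      field_simp
      ring

theorem integral_Ioi_one_sub_sqrt_div_div_one_add_eq_intervalIntegral {a b : ℝ} (ha : 0 < a)
    (hab : a < b) :
    ∫ c in Ioi 0, (1 - √((a + c) / (b + c))) / (1 + c)
      = ∫ u in √(a / b)..1, 2 * u * (b - a) / ((1 + u) * ((1 - a) - (1 - b) * u ^ 2)) := by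
  have hb : 0 < b := ha.trans hab
  have hu₀ : 0 ≤ √(a / b) := sqrt_nonneg _
  have hu₀1 : √(a / b) < 1 := by
    rw [sqrt_lt' one_pos, one_pow, div_lt_one hb]; exact hab
  have hsub : Ioo √(a / b) 1 ⊆ Ioo 0 1 := Ioo_subset_Ioo_left hu₀
  have hden (u) (hu : u ∈ Ioo √(a / b) 1) : 1 - u ^ 2 ≠ 0 := by
    have := hsub hu; nlinarith [this.1, this.2]
  rw [intervalIntegral.integral_of_le hu₀1.le, integral_Ioc_eq_integral_Ioo,
    ← image_Ioo_div_one_sub_sq ha hab, integral_image_eq_integral_abs_deriv_smul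
      measurableSet_Ioo (fun u hu ↦ (hasDerivAt_div_one_sub_sq a b (hden u hu)).hasDerivWithinAt)
      ((injOn_div_one_sub_sq hab.ne).mono hsub)]
  refine setIntegral_congr_fun measurableSet_Ioo fun u hu ↦ ?_
  obtain ⟨hu0, hu1⟩ := hsub hu
  have hba : 0 < b - a := sub_pos.2 hab
  have h1u : 0 < 1 - u ^ 2 := by nlinarith
  have hψ : (b * u ^ 2 - a) / (1 - u ^ 2) ∈ Ioi 0 :=
    image_Ioo_div_one_sub_sq ha hab ▸ mem_image_of_mem _ hu
  have h1 : a + (b * u ^ 2 - a) / (1 - u ^ 2) = (b - a) * u ^ 2 / (1 - u ^ 2) := by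
    field_simp; ring
  have h2 : b + (b * u ^ 2 - a) / (1 - u ^ 2) = (b - a) / (1 - u ^ 2) := by
    field_simp; ring
  have h3 :
      1 + (b * u ^ 2 - a) / (1 - u ^ 2) = ((1 - a) - (1 - b) * u ^ 2) / (1 - u ^ 2) := by
    field_simp; ring
  have h4 : 0 < (1 - a) - (1 - b) * u ^ 2 := by
    have := mul_pos (by linarith [hψ.out] : 0 < 1 + (b * u ^ 2 - a) / (1 - u ^ 2)) h1u
    rwa [h3, div_mul_cancel₀ _ h1u.ne'] at this
  rw [h1, h2, h3, div_div_div_cancel_right₀ h1u.ne', mul_div_cancel_left₀ _ hba.ne',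
    sqrt_sq hu0.le, abs_of_pos (by positivity), smul_eq_mul]
  field_simp
  ring

noncomputable def logPrimitive (α β u : ℝ) : ℝ :=
  -2 * log (1 + u) + (1 + α / β) * log (α + β * u) + (1 - α / β) * log (α - β * u)

lemma hasDerivAt_logPrimitive {α β u : ℝ} (hβ : 0 < β) (hu : 0 ≤ u) (hβu : β * u < α) :
    HasDerivAt (logPrimitive α β)
      (2 * u * (α ^ 2 - β ^ 2) / ((1 + u) * (α ^ 2 - β ^ 2 * u ^ 2))) u := by
  have h1 : 1 + u ≠ 0 := by linarith
  have h2 : α + β * u ≠ 0 := by nlinarith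
  have h3 : α - β * u ≠ 0 := by linarith
  have d1 := ((hasDerivAt_id' u).const_add 1).log h1
  have d2 := (((hasDerivAt_id' u).const_mul β).const_add α).log h2
  have d3 := (((hasDerivAt_id' u).const_mul β).const_sub α).log h3
  refine (((d1.const_mul (-2)).add (d2.const_mul (1 + α / β))).add
    (d3.const_mul (1 - α / β))).congr_deriv ?_
  have := hβ.ne'
  have : α + u * β ≠ 0 := by rwa [mul_comm]
  have : α - u * β ≠ 0 := by rwa [mul_comm]
  rw [show α ^ 2 - β ^ 2 * u ^ 2 = (α + β * u) * (α - β * u) by ring]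
  field_simp
  ring

lemma integral_eq_logPrimitive_sub {α β u₀ : ℝ} (hβ : 0 < β) (hβα : β < α) (h0 : 0 ≤ u₀)
    (h1 : u₀ ≤ 1) :
    ∫ u in u₀..1, 2 * u * (α ^ 2 - β ^ 2) / ((1 + u) * (α ^ 2 - β ^ 2 * u ^ 2))
      = logPrimitive α β 1 - logPrimitive α β u₀ := by
  have hderiv (u) (hu : u ∈ uIcc u₀ 1) : HasDerivAt (logPrimitive α β)
      (2 * u * (α ^ 2 - β ^ 2) / ((1 + u) * (α ^ 2 - β ^ 2 * u ^ 2))) u := by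
    rw [uIcc_of_le h1] at hu
    exact hasDerivAt_logPrimitive hβ (h0.trans hu.1) (by nlinarith [hu.2])
  refine intervalIntegral.integral_eq_sub_of_hasDerivAt hderiv
    (ContinuousOn.intervalIntegrable ?_)
  rw [uIcc_of_le h1]
  refine ContinuousOn.div (by fun_prop) (by fun_prop) fun u hu ↦ ?_
  have hu0 : 0 ≤ u := h0.trans hu.1
  have hβu : 0 ≤ β * u := mul_nonneg hβ.le hu0
  have : β * u < α := by nlinarith [hu.2]
  have : 0 < α ^ 2 - β ^ 2 * u ^ 2 := by
    nlinarith [mul_pos (sub_pos.2 this) (by linarith : 0 < α + β * u)]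
  exact mul_ne_zero (by linarith) this.ne'

theorem integral_Ioi_one_sub_sqrt_div_div_one_add {a b : ℝ} (ha : 0 < a) (hab : a < b)
    (hb : b < 1) :
    ∫ c in Ioi 0, (1 - √((a + c) / (b + c))) / (1 + c)
      = logPrimitive √(1 - a) √(1 - b) 1 - logPrimitive √(1 - a) √(1 - b) √(a / b) := by
  have hu₀ : √(a / b) ≤ 1 := by
    rw [sqrt_le_one]; exact (div_le_one (ha.trans hab)).2 hab.le
  rw [integral_Ioi_one_sub_sqrt_div_div_one_add_eq_intervalIntegral ha hab,
    ← integral_eq_logPrimitive_sub (sqrt_pos.2 (by linarith))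
      (sqrt_lt_sqrt (by linarith) (by linarith)) (sqrt_nonneg _) hu₀,
    sq_sqrt (by linarith), sq_sqrt (by linarith), sub_sub_sub_cancel_left]

lemma logPrimitive_one_sub_logPrimitive_div {α β s t : ℝ} (hs : 0 < s) (hst : s < t)
    (hβ : 0 < β) (hβα : β < α) (h : t ^ 2 * α ^ 2 - s ^ 2 * β ^ 2 = α ^ 2 - β ^ 2) :
    logPrimitive α β 1 - logPrimitive α β (s / t)
      = -2 * (log (2 / (s + t)) + α / β * log ((s * β + t * α) / (α + β))) := by
  have ht : 0 < t := hs.trans hst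
  have hα : 0 < α := hβ.trans hβα
  have hβα' : 0 < α - β := sub_pos.2 hβα
  have hsβ : s * β < t * α := mul_lt_mul hst hβα.le hβ ht.le
  have hsβ' : 0 < t * α - s * β := sub_pos.2 hsβ
  have e1 : 1 + s / t = (s + t) / t := by field_simp; ring
  have e2 : α + β * (s / t) = (s * β + t * α) / t := by field_simp; ring
  have e3 : α - β * (s / t) = (t * α - s * β) / t := by field_simp
  have key : log (s * β + t * α) + log (t * α - s * β) = log (α + β) + log (α - β) := by
    rw [← log_mul (by positivity) hsβ'.ne', ← log_mul (by linarith) hβα'.ne']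
    congr 1
    linear_combination h
  unfold logPrimitive
  rw [e1, e2, e3, mul_one, one_add_one_eq_two, log_div (by positivity) ht.ne',
    log_div (by positivity) ht.ne', log_div hsβ'.ne' ht.ne', log_div two_ne_zero (by positivity),
    log_div (by positivity) (by positivity)]
  linear_combination (α / β - 1) * key

/-- `∫_a^b (t log x / (1-x)) √((x-a)/(b-x)) dx
  = 2πt [log(2/(√a+√b)) + (√(1-a)/√(1-b)) log((√(a(1-b))+√(b(1-a)))/(√(1-a)+√(1-b)))]`
for `0 < a < b < 1`. -/
theorem log_weight_integral_one_sub_x (a b t : ℝ) (ha : 0 < a) (hab : a < b) (hb : b < 1) :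
    (∫ x in a..b, t * Real.log x / (1 - x) * Real.sqrt ((x - a) / (b - x)))
      = 2 * π * t *
          (Real.log (2 / (Real.sqrt a + Real.sqrt b))
            + Real.sqrt (1 - a) / Real.sqrt (1 - b) *
                Real.log ((Real.sqrt (a * (1 - b)) + Real.sqrt (b * (1 - a)))
                  / (Real.sqrt (1 - a) + Real.sqrt (1 - b)))) := by
  have hb₀ : 0 < b := ha.trans hab
  have hsign (x : ℝ) : t * log x / (1 - x) * √((x - a) / (b - x))
      = -t * (√((x - a) / (b - x)) * (log x / (x - 1))) := by
    rw [← neg_sub x 1, div_neg]; ring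
  have hcross :
      √b ^ 2 * √(1 - a) ^ 2 - √a ^ 2 * √(1 - b) ^ 2 = √(1 - a) ^ 2 - √(1 - b) ^ 2 := by
    rw [sq_sqrt ha.le, sq_sqrt hb₀.le, sq_sqrt (by linarith), sq_sqrt (by linarith)]
    ring
  simp_rw [intervalIntegral.integral_of_le hab.le, integral_Ioc_eq_integral_Ioo, hsign]
  rw [integral_const_mul, integral_Ioo_sqrt_div_sub_mul_log_div ha hab hb,
    integral_Ioi_one_sub_sqrt_div_div_one_add ha hab hb, sqrt_div ha.le,
    logPrimitive_one_sub_logPrimitive_div (sqrt_pos.2 ha) (sqrt_lt_sqrt ha.le hab)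
      (sqrt_pos.2 (by linarith)) (sqrt_lt_sqrt (by linarith) (by linarith)) hcross,
    sqrt_mul ha.le, sqrt_mul hb₀.le]
  ring
end

section
/- For d ∈ (0,1), the integral ∫_0^d log(1−x)/√(x(d−x)) dx equals −2π log(2/(1 + √(1−d))). -/
/-!
The substitution `x = (d/2)(1 - cos t)` turns the integral into
`∫₀^π log (1 - (d/2)(1 - cos t)) dt`. With `s = √(1 - d)` and `r = (s - 1)/(s + 1)`, the integrand
is `log (((1 + s)/2)²) + log |e^{it} - r|²`. As it depends only on `cos t`, its integral over
`[0, π]` is half of that over the whole circle, where Jensen's formula gives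
`∫₀^{2π} log |e^{it} - r| dt = 2π log⁺ |r| = 0`.
-/

open Real MeasureTheory intervalIntegral Set

theorem integral_div_sqrt_mul_sub_eq_integral_comp_cos {E : Type*} [NormedAddCommGroup E]
    [NormedSpace ℝ E] (g : ℝ → E) {d : ℝ} (hd : 0 < d) :
    ∫ x in 0..d, (√(x * (d - x)))⁻¹ • g x = ∫ t in 0..π, g (d / 2 * (1 - cos t)) := by
  have hderiv : ∀ t ∈ Ioo 0 π, HasDerivAt (fun t => d / 2 * (1 - cos t)) (d / 2 * sin t) t :=
    fun t _ => by simpa using ((hasDerivAt_cos t).const_sub 1).const_mul (d / 2)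
  have hsub := integral_Icc_deriv_smul_of_deriv_nonneg (g := fun x => (√(x * (d - x)))⁻¹ • g x)
    (by fun_prop) hderiv (fun t ht => by have := sin_pos_of_pos_of_lt_pi ht.1 ht.2; positivity)
    pi_pos.le
  simp only [cos_zero, cos_pi, sub_self, mul_zero] at hsub
  rw [show d / 2 * (1 - -1) = d by ring] at hsub
  rw [integral_of_le hd.le, integral_of_le pi_pos.le, ← integral_Icc_eq_integral_Ioc,
    ← integral_Icc_eq_integral_Ioc, ← hsub, integral_Icc_eq_integral_Ioo,
    integral_Icc_eq_integral_Ioo]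
  -- the integrands differ at `t = 0, π`, where `sin t = 0` kills the left one
  refine setIntegral_congr_fun measurableSet_Ioo fun t ht => ?_
  have hsin : 0 < d / 2 * sin t := by have := sin_pos_of_pos_of_lt_pi ht.1 ht.2; positivity
  have hsq : d / 2 * (1 - cos t) * (d - d / 2 * (1 - cos t)) = (d / 2 * sin t) ^ 2 := by
    linear_combination (-d ^ 2 / 4) * sin_sq_add_cos_sq t
  rw [hsq, sqrt_sq hsin.le, smul_smul, mul_inv_cancel₀ hsin.ne', one_smul]

theorem integral_comp_cos_zero_two_pi {E : Type*} [NormedAddCommGroup E] [NormedSpace ℝ E]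
    {f : ℝ → E} (hf : IntervalIntegrable (fun t => f (cos t)) volume 0 (2 * π)) :
    ∫ t in 0..2 * π, f (cos t) = (2 : ℝ) • ∫ t in 0..π, f (cos t) := by
  have hπ : π ∈ uIcc 0 (2 * π) := by
    rw [uIcc_of_le (by positivity)]
    constructor <;> linarith [pi_pos]
  have hreflect : ∫ t in π..2 * π, f (cos t) = ∫ t in 0..π, f (cos t) := by
    have := integral_comp_sub_left (fun t => f (cos t)) (2 * π) (a := 0) (b := π)
    simp only [cos_two_pi_sub] at this
    rw [this, sub_zero, two_mul, add_sub_cancel_right]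
  rw [← integral_add_adjacent_intervals (hf.mono_set (uIcc_subset_uIcc_left hπ))
    (hf.mono_set (uIcc_subset_uIcc_right hπ)), hreflect, two_smul]

theorem norm_circleMap_zero_one_sub_ofReal_sq (r t : ℝ) :
    ‖circleMap 0 1 t - r‖ ^ 2 = 1 - 2 * r * cos t + r ^ 2 := by
  rw [Complex.sq_norm, Complex.normSq_apply]
  simp only [Complex.sub_re, circleMap_zero_re, one_mul, Complex.ofReal_re, Complex.sub_im,
    circleMap_zero_im, Complex.ofReal_im, sub_zero]
  nlinarith [sin_sq_add_cos_sq t]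

theorem integral_log_one_sub_two_mul_cos_add_sq (r : ℝ) :
    ∫ t in 0..π, log (1 - 2 * r * cos t + r ^ 2) = 2 * π * log⁺ r := by
  have hnorm : (fun t => log (1 - 2 * r * cos t + r ^ 2))
      = fun t => 2 * log ‖circleMap 0 1 t - r‖ := by
    ext t
    rw [← norm_circleMap_zero_one_sub_ofReal_sq, log_pow, Nat.cast_ofNat]
  have hint : IntervalIntegrable (fun t => log (1 - 2 * r * cos t + r ^ 2)) volume 0 (2 * π) := by
    rw [hnorm]
    exact (circleIntegrable_log_norm_sub_const (a := (r : ℂ)) (c := 0) 1).const_mul 2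
  have havg := circleAverage_log_norm_sub_const_eq_posLog (a := (r : ℂ))
  rw [circleAverage_def, Complex.norm_real, norm_eq_abs, posLog_abs, smul_eq_mul] at havg
  have hfull : ∫ t in 0..2 * π, log (1 - 2 * r * cos t + r ^ 2) = 2 * (2 * π * log⁺ r) := by
    rw [hnorm, intervalIntegral.integral_const_mul, ← havg]
    field_simp
  rw [integral_comp_cos_zero_two_pi (f := fun c => log (1 - 2 * r * c + r ^ 2)) hint,
    smul_eq_mul] at hfull
  linarith

theorem one_sub_two_mul_cos_add_sq_pos {r : ℝ} (hr : |r| < 1) (t : ℝ) :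
    0 < 1 - 2 * r * cos t + r ^ 2 := by
  have : r * cos t ≤ |r| := (le_abs_self _).trans (by
    rw [abs_mul]; exact mul_le_of_le_one_right (abs_nonneg r) (abs_cos_le_one t))
  nlinarith [sq_abs r]

theorem integral_log_one_sub_half_mul_one_sub_cos {d : ℝ} (hd : d < 1) :
    ∫ t in 0..π, log (1 - d / 2 * (1 - cos t)) = 2 * π * log ((1 + √(1 - d)) / 2) := by
  set s := √(1 - d)
  have hs : 0 < s := sqrt_pos.mpr (by linarith)
  have hs2 : s ^ 2 = 1 - d := sq_sqrt (by linarith)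
  set r := (s - 1) / (s + 1)
  have hr : |r| < 1 := by
    rw [abs_div, abs_of_pos (by linarith : 0 < s + 1), div_lt_one (by linarith), abs_lt]
    constructor <;> linarith
  have hfactor (t : ℝ) :
      1 - d / 2 * (1 - cos t) = ((1 + s) / 2) ^ 2 * (1 - 2 * r * cos t + r ^ 2) := by
    rw [show d = 1 - s ^ 2 by linarith]
    simp only [r]
    field_simp
    ring
  have hlog (t : ℝ) : log (1 - d / 2 * (1 - cos t))
      = 2 * log ((1 + s) / 2) + log (1 - 2 * r * cos t + r ^ 2) := by
    rw [hfactor, log_mul (by positivity) (one_sub_two_mul_cos_add_sq_pos hr t).ne', log_pow,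
      Nat.cast_ofNat]
  have hcont : Continuous fun t => log (1 - 2 * r * cos t + r ^ 2) :=
    (by fun_prop : Continuous fun t => 1 - 2 * r * cos t + r ^ 2).log
      fun t => (one_sub_two_mul_cos_add_sq_pos hr t).ne'
  rw [integral_congr fun t _ => hlog t, integral_add intervalIntegrable_const
    (hcont.intervalIntegrable _ _), intervalIntegral.integral_const,
    integral_log_one_sub_two_mul_cos_add_sq,
    (posLog_eq_zero_iff r).mpr hr.le, sub_zero, smul_eq_mul]
  ring

/-- `∫_0^d log(1-x)/√(x(d-x)) dx = -2π log(2/(1+√(1-d)))` for `d ∈ (0,1)`. -/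
theorem log_integral_hard_edge (d : ℝ) (hd : d ∈ Set.Ioo (0 : ℝ) 1) :
    (∫ x in (0 : ℝ)..d, Real.log (1 - x) / Real.sqrt (x * (d - x)))
      = -2 * π * Real.log (2 / (1 + Real.sqrt (1 - d))) := by
  have hcheb := integral_div_sqrt_mul_sub_eq_integral_comp_cos (fun x => log (1 - x)) hd.1
  simp only [smul_eq_mul, inv_mul_eq_div] at hcheb
  rw [hcheb, integral_log_one_sub_half_mul_one_sub_cos hd.2, ← inv_div, log_inv]
  ring
end

section
/- For d ∈ (0,1), the integral ∫_0^d [1/(1−x)] · log(1−x)/√(x(d−x)) dx equals (π/√(1−d)) log( (4(1−d)/d) · (1 − √(1−d))/(1 + √(1−d)) ). -/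
open Real MeasureTheory Set intervalIntegral

/-!
Expanding `-log (1 - x) = ∫₀¹ x / (1 - s x) ds` and exchanging the order of integration, the
partial fractions `x / ((1 - s x)(1 - x)) = (1 - s)⁻¹ (1 / (1 - x) - 1 / (1 - s x))` reduce the
inner integral to the family `∫₀ᵈ dx / ((1 - t x) √(x (d - x))) = π / √(1 - t d)`, which a Möbius
substitution turns into an arcsine. The remaining integral of
`(π / √(1 - d) - π / √(1 - s d)) / (1 - s)` over `s ∈ (0, 1)` is elementary: its antiderivative is
`-(2π / √(1 - d)) log (√(1 - s d) + √(1 - d))`.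
-/

section Kernel

variable {d t : ℝ}

lemma one_sub_mul_pos_of_mem_Icc (htd : t * d < 1) {x : ℝ} (hx : x ∈ Icc 0 d) :
    0 < 1 - t * x := by
  rcases le_total 0 t with ht | ht <;> nlinarith [hx.1, hx.2]

/-- Under `A = ((2 - t d) x - d) / (d (1 - t x))`, which maps `[0, d]` onto `[-1, 1]`, one has
`dx / ((1 - t x) √(x (d - x))) = dA / (√(1 - t d) √(1 - A²))`. -/
noncomputable def arcsinPrimitive (d t x : ℝ) : ℝ :=
  arcsin (((2 - t * d) * x - d) / (d * (1 - t * x))) / √(1 - t * d)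

lemma continuousOn_arcsinPrimitive (hd : 0 < d) (htd : t * d < 1) :
    ContinuousOn (arcsinPrimitive d t) (Icc 0 d) :=
  (continuous_arcsin.comp_continuousOn (ContinuousOn.div (by fun_prop) (by fun_prop)
    fun x hx => (mul_pos hd (one_sub_mul_pos_of_mem_Icc htd hx)).ne')).div_const _

lemma one_sub_sq_mobius (hd : d ≠ 0) {x : ℝ} (hx : 1 - t * x ≠ 0) (hxd : 0 ≤ x * (d - x))
    (htd : 0 ≤ 1 - t * d) :
    1 - (((2 - t * d) * x - d) / (d * (1 - t * x))) ^ 2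
      = (2 * √(x * (d - x)) * √(1 - t * d) / (d * (1 - t * x))) ^ 2 := by
  simp only [div_pow, mul_pow, sq_sqrt hxd, sq_sqrt htd]
  field_simp
  ring

lemma hasDerivAt_arcsinPrimitive (hd : 0 < d) (htd : t * d < 1) {x : ℝ} (hx : x ∈ Ioo 0 d) :
    HasDerivAt (arcsinPrimitive d t) ((1 - t * x) * √(x * (d - x)))⁻¹ x := by
  have htx : 0 < 1 - t * x := one_sub_mul_pos_of_mem_Icc htd (Ioo_subset_Icc_self hx)
  have hD : 0 < d * (1 - t * x) := mul_pos hd htx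
  have hroot : 0 < √(x * (d - x)) := sqrt_pos.2 (mul_pos hx.1 (sub_pos.2 hx.2))
  have hmob : HasDerivAt (fun y => ((2 - t * d) * y - d) / (d * (1 - t * y)))
      (2 * d * (1 - t * d) / (d * (1 - t * x)) ^ 2) x := by
    have := (((hasDerivAt_id x).const_mul (2 - t * d)).sub_const d).div
      (((hasDerivAt_id x).const_mul t).const_sub 1 |>.const_mul d) hD.ne'
    exact this.congr_deriv (by simp only [id]; ring)
  set A := ((2 - t * d) * x - d) / (d * (1 - t * x))
  have hsq : 1 - A ^ 2 = (2 * √(x * (d - x)) * √(1 - t * d) / (d * (1 - t * x))) ^ 2 :=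
    one_sub_sq_mobius hd.ne' htx.ne' (mul_pos hx.1 (sub_pos.2 hx.2)).le (sub_pos.2 htd).le
  have hA : 0 < 1 - A ^ 2 := by rw [hsq]; positivity
  have hA₁ : A ≠ -1 := by rintro h; rw [h] at hA; norm_num at hA
  have hA₂ : A ≠ 1 := by rintro h; rw [h] at hA; norm_num at hA
  refine (((hasDerivAt_arcsin hA₁ hA₂).comp x hmob).div_const (√(1 - t * d))).congr_deriv ?_
  rw [hsq, sqrt_sq (by positivity)]
  field_simp
  rw [sq_sqrt (by linarith), div_mul_cancel_left₀ (by linarith), one_div]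

lemma integrableOn_inv_mul_sqrt (hd : 0 < d) (htd : t * d < 1) :
    IntegrableOn (fun x => ((1 - t * x) * √(x * (d - x)))⁻¹) (Ioc 0 d) :=
  integrableOn_deriv_of_nonneg (continuousOn_arcsinPrimitive hd htd)
    (fun _ hx => hasDerivAt_arcsinPrimitive hd htd hx) fun _ hx =>
      inv_nonneg.2 <| mul_nonneg
        (one_sub_mul_pos_of_mem_Icc htd (Ioo_subset_Icc_self hx)).le (sqrt_nonneg _)

lemma integral_inv_mul_sqrt (hd : 0 < d) (htd : t * d < 1) :
    ∫ x in 0..d, ((1 - t * x) * √(x * (d - x)))⁻¹ = π / √(1 - t * d) := by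
  rw [integral_eq_sub_of_hasDerivAt_of_le hd.le (continuousOn_arcsinPrimitive hd htd)
    (fun _ hx => hasDerivAt_arcsinPrimitive hd htd hx)
    ((intervalIntegrable_iff_integrableOn_Ioc_of_le hd.le).2 (integrableOn_inv_mul_sqrt hd htd))]
  have htd' : 1 - t * d ≠ 0 := (sub_pos.2 htd).ne'
  have hright : ((2 - t * d) * d - d) / (d * (1 - t * d)) = 1 := by
    rw [div_eq_one_iff_eq (mul_ne_zero hd.ne' htd')]; ring
  have hleft : ((2 - t * d) * 0 - d) / (d * (1 - t * 0)) = -1 := by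
    field_simp [hd.ne']
    ring
  simp only [arcsinPrimitive, hright, hleft, arcsin_one, arcsin_neg_one]
  ring

end Kernel

lemma integral_div_one_sub_mul {x : ℝ} (hx : x < 1) :
    ∫ s in 0..1, x / (1 - s * x) = -log (1 - x) := by
  have hpos : ∀ s ∈ uIcc (0 : ℝ) 1, 0 < 1 - s * x := fun s hs => by
    rw [uIcc_of_le zero_le_one] at hs
    rcases le_total 0 x with h | h <;> nlinarith [hs.1, hs.2]
  have hint : IntervalIntegrable (fun s => x / (1 - s * x)) volume 0 1 :=
    (continuousOn_const.div (by fun_prop) fun s hs => (hpos s hs).ne').intervalIntegrable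
  rw [integral_eq_sub_of_hasDerivAt (f := fun s => -log (1 - s * x)) (fun s hs => ?_) hint]
  · simp
  · exact ((((hasDerivAt_id s).mul_const x).const_sub 1).log (hpos s hs).ne').neg.congr_deriv
      (by simp only [id]; ring)

section LogIntegral

variable {d : ℝ}

lemma integrable_div_one_sub_mul_mul_inv_sqrt (hd0 : 0 < d) (hd1 : d < 1) :
    Integrable (Function.uncurry fun x s => x / (1 - s * x) * ((1 - x) * √(x * (d - x)))⁻¹)
      ((volume.restrict (Ioc 0 d)).prod (volume.restrict (Ioo 0 1))) := by
  have hbound : Integrable (fun z : ℝ × ℝ => d / (1 - d) * ((1 - 1 * z.1) * √(z.1 * (d - z.1)))⁻¹)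
      ((volume.restrict (Ioc 0 d)).prod (volume.restrict (Ioo 0 1))) :=
    ((integrableOn_inv_mul_sqrt hd0 (by linarith)).const_mul _).comp_fst _
  refine hbound.mono' (by fun_prop) ?_
  rw [Measure.prod_restrict]
  filter_upwards [ae_restrict_mem (measurableSet_Ioc.prod measurableSet_Ioo)]
    with ⟨x, s⟩ ⟨⟨hx0, hxd⟩, hs0, hs1⟩
  dsimp only at hx0 hxd hs0 hs1
  have hkernel : 0 ≤ ((1 - x) * √(x * (d - x)))⁻¹ :=
    inv_nonneg.2 (mul_nonneg (by linarith) (sqrt_nonneg _))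
  rw [Function.uncurry_apply_pair, one_mul, norm_mul, norm_div, Real.norm_of_nonneg hx0.le,
    Real.norm_of_nonneg (by nlinarith), Real.norm_of_nonneg hkernel]
  gcongr
  nlinarith

lemma setIntegral_div_one_sub_mul_mul_inv_sqrt (hd0 : 0 < d) (hd1 : d < 1) {s : ℝ} (hs : s < 1) :
    ∫ x in Ioc 0 d, x / (1 - s * x) * ((1 - x) * √(x * (d - x)))⁻¹
      = (π / √(1 - d) - π / √(1 - s * d)) / (1 - s) := by
  have hsd : s * d < 1 := by rcases le_total 0 s with h | h <;> nlinarith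
  have hsplit : ∀ x ∈ Ioc 0 d, x / (1 - s * x) * ((1 - x) * √(x * (d - x)))⁻¹
      = (1 - s)⁻¹ * (((1 - 1 * x) * √(x * (d - x)))⁻¹ - ((1 - s * x) * √(x * (d - x)))⁻¹) := by
    intro x hx
    have hx1 : 1 - x ≠ 0 := by linarith [hx.2]
    have hsx : 1 - x * s ≠ 0 := by
      rw [mul_comm]; exact (one_sub_mul_pos_of_mem_Icc hsd (Ioc_subset_Icc_self hx)).ne'
    have hs1 : 1 - s ≠ 0 := by linarith
    simp only [one_mul, mul_inv]
    generalize (√(x * (d - x)))⁻¹ = r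
    field_simp
    ring
  rw [setIntegral_congr_fun measurableSet_Ioc hsplit, MeasureTheory.integral_const_mul,
    integral_sub (integrableOn_inv_mul_sqrt hd0 (by linarith)) (integrableOn_inv_mul_sqrt hd0 hsd),
    ← integral_of_le hd0.le, ← integral_of_le hd0.le, integral_inv_mul_sqrt hd0 (by linarith),
    integral_inv_mul_sqrt hd0 hsd, one_mul, div_eq_inv_mul _ (1 - s)]

lemma hasDerivAt_log_sqrt_one_sub_mul_add {c s : ℝ} (hs : 0 < 1 - s * d) (hc : 0 ≤ c) :
    HasDerivAt (fun s => log (√(1 - s * d) + c))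
      (-d / (2 * √(1 - s * d) * (√(1 - s * d) + c))) s := by
  have hu : 0 < √(1 - s * d) := sqrt_pos.2 hs
  refine ((((hasDerivAt_id s).mul_const d).const_sub 1).sqrt hs.ne' |>.add_const c |>.log
    (by positivity)).congr_deriv ?_
  simp only [id]
  field_simp

lemma setIntegral_sub_div_sqrt_div_one_sub (hd0 : 0 < d) (hd1 : d < 1) :
    ∫ s in Ioo 0 1, (π / √(1 - d) - π / √(1 - s * d)) / (1 - s)
      = 2 * π / √(1 - d) * (log (1 + √(1 - d)) - log (2 * √(1 - d))) := by
  set b := √(1 - d) with hb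
  have hb0 : 0 < b := sqrt_pos.2 (by linarith)
  have hpos : ∀ s ∈ uIcc (0 : ℝ) 1, 0 < 1 - s * d := fun s hs => by
    rw [uIcc_of_le zero_le_one] at hs
    nlinarith [hs.1, hs.2]
  have hderiv : ∀ s ∈ uIcc (0 : ℝ) 1, HasDerivAt (fun s => -(2 * π / b) * log (√(1 - s * d) + b))
      (-(2 * π / b) * (-d / (2 * √(1 - s * d) * (√(1 - s * d) + b)))) s := fun s hs =>
    (hasDerivAt_log_sqrt_one_sub_mul_add (hpos s hs) hb0.le).const_mul _
  have hcont : ContinuousOn (fun s => -(2 * π / b) * (-d / (2 * √(1 - s * d) * (√(1 - s * d) + b))))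
      (uIcc 0 1) := by
    refine continuousOn_const.mul (continuousOn_const.div (by fun_prop) fun s hs => ?_)
    have := sqrt_pos.2 (hpos s hs)
    positivity
  calc ∫ s in Ioo 0 1, (π / b - π / √(1 - s * d)) / (1 - s)
      = ∫ s in Ioo 0 1, -(2 * π / b) * (-d / (2 * √(1 - s * d) * (√(1 - s * d) + b))) := by
        refine setIntegral_congr_fun measurableSet_Ioo fun s hs => ?_
        have hs' : 0 < 1 - s * d := by nlinarith [hs.1, hs.2]
        have hu : 0 < √(1 - s * d) := sqrt_pos.2 hs'
        have hu2 : √(1 - s * d) ^ 2 = 1 - s * d := sq_sqrt hs'.le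
        have hb2 : b ^ 2 = 1 - d := sq_sqrt (by linarith)
        have hs1 : 1 - s ≠ 0 := by linarith [hs.2]
        field_simp
        linear_combination hu2 - hb2
    _ = ∫ s in 0..1, -(2 * π / b) * (-d / (2 * √(1 - s * d) * (√(1 - s * d) + b))) := by
        rw [integral_of_le zero_le_one, integral_Ioc_eq_integral_Ioo]
    _ = 2 * π / b * (log (1 + b) - log (2 * b)) := by
        rw [integral_eq_sub_of_hasDerivAt hderiv hcont.intervalIntegrable]
        norm_num [← hb, ← two_mul]
        ring

lemma log_four_mul_one_sub_div_mul (hd0 : 0 < d) (hd1 : d < 1) :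
    log ((4 * (1 - d) / d) * ((1 - √(1 - d)) / (1 + √(1 - d))))
      = 2 * (log (2 * √(1 - d)) - log (1 + √(1 - d))) := by
  set b := √(1 - d)
  have hb0 : 0 < b := sqrt_pos.2 (by linarith)
  have hb2 : b ^ 2 = 1 - d := sq_sqrt (by linarith)
  have hb1 : 1 - b ≠ 0 := by nlinarith
  have hsq : (4 * (1 - d) / d) * ((1 - b) / (1 + b)) = (2 * b / (1 + b)) ^ 2 := by
    rw [← hb2, show d = (1 - b) * (1 + b) by linear_combination hb2]
    field_simp
    ring
  rw [hsq, log_pow, log_div (by positivity) (by positivity)]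
  push_cast
  ring

end LogIntegral

/-- `∫_0^d log(1-x)/((1-x)√(x(d-x))) dx
  = (π/√(1-d)) log((4(1-d)/d)·(1-√(1-d))/(1+√(1-d)))` for `d ∈ (0,1)`. -/
theorem log_integral_hard_edge₂ (d : ℝ) (hd : d ∈ Set.Ioo (0 : ℝ) 1) :
    (∫ x in (0 : ℝ)..d, 1 / (1 - x) * (Real.log (1 - x) / Real.sqrt (x * (d - x))))
      = π / Real.sqrt (1 - d) *
          Real.log ((4 * (1 - d) / d) * ((1 - Real.sqrt (1 - d)) / (1 + Real.sqrt (1 - d)))) := by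
  obtain ⟨hd0, hd1⟩ := hd
  calc (∫ x in (0 : ℝ)..d, 1 / (1 - x) * (log (1 - x) / √(x * (d - x))))
      = -∫ x in Ioc 0 d, ∫ s in Ioo 0 1, x / (1 - s * x) * ((1 - x) * √(x * (d - x)))⁻¹ := by
        rw [integral_of_le hd0.le, ← MeasureTheory.integral_neg]
        refine setIntegral_congr_fun measurableSet_Ioc fun x hx => ?_
        rw [MeasureTheory.integral_mul_const, ← integral_Ioc_eq_integral_Ioo,
          ← integral_of_le zero_le_one, integral_div_one_sub_mul (by linarith [hx.2]), mul_inv]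
        ring
    _ = -∫ s in Ioo 0 1, ∫ x in Ioc 0 d, x / (1 - s * x) * ((1 - x) * √(x * (d - x)))⁻¹ := by
        rw [integral_integral_swap (integrable_div_one_sub_mul_mul_inv_sqrt hd0 hd1)]
    _ = -∫ s in Ioo 0 1, (π / √(1 - d) - π / √(1 - s * d)) / (1 - s) := by
        rw [setIntegral_congr_fun measurableSet_Ioo fun s hs =>
          setIntegral_div_one_sub_mul_mul_inv_sqrt hd0 hd1 hs.2]
    _ = π / √(1 - d) * log ((4 * (1 - d) / d) * ((1 - √(1 - d)) / (1 + √(1 - d)))) := by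
        rw [setIntegral_sub_div_sqrt_div_one_sub hd0 hd1, log_four_mul_one_sub_div_mul hd0 hd1]
        ring
end

section
/- For x ≥ 1 and real B with B > 1, ∫_1^x (x−y)/(√(y²−1)(y+B)) dy = (B+x)/√(B²−1) · log( (1 + Bx + √((B²−1)(x²−1)))/(B+x) ) + (1/2) log( (x − √(x²−1))/(x + √(x²−1)) ). -/
open Real Set MeasureTheory intervalIntegral

/-!
An antiderivative of the integrand on `(1, ∞)` is
`(B + x) / √(B² - 1) * log ((1 + B y + √((B² - 1)(y² - 1))) / (B + y)) - arcosh y`;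
it vanishes at `y = 1`, and `1/2 * log ((x - √(x² - 1)) / (x + √(x² - 1))) = -arcosh x`.
The integrand is nonnegative, so its integrability across the singularity at `y = 1` also follows
from the antiderivative.
-/

lemma half_log_sub_sqrt_div_add_sqrt {x : ℝ} (hx : 1 ≤ x) :
    1 / 2 * log ((x - √(x ^ 2 - 1)) / (x + √(x ^ 2 - 1))) = -arcosh x := by
  rw [← add_sqrt_self_sq_sub_one_inv hx, inv_div_left, ← sq, log_inv, log_pow, arcosh]
  push_cast
  ring

lemma hasDerivAt_sqrt_mul_sq_sub_one {a y : ℝ} (ha : 0 ≤ a) (hy : 1 < y) :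
    HasDerivAt (fun t => √(a * (t ^ 2 - 1))) (√a * y / √(y ^ 2 - 1)) y := by
  have hs : 0 < √(y ^ 2 - 1) := sqrt_pos.2 (by nlinarith)
  simp_rw [sqrt_mul ha]
  refine ((((hasDerivAt_pow 2 y).sub_const 1).sqrt (by nlinarith)).const_mul √a).congr_deriv ?_
  field_simp
  ring

lemma hasDerivAt_log_one_add_mul_add_sqrt_div {B y : ℝ} (hB : 1 ≤ B) (hy : 1 < y) :
    HasDerivAt (fun t => log ((1 + B * t + √((B ^ 2 - 1) * (t ^ 2 - 1))) / (B + t)))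
      (√(B ^ 2 - 1) / (√(y ^ 2 - 1) * (y + B))) y := by
  have hB2 : 0 ≤ B ^ 2 - 1 := by nlinarith
  have hc := sq_sqrt hB2
  have hs := sq_sqrt (show 0 ≤ y ^ 2 - 1 by nlinarith)
  have hs0 : 0 < √(y ^ 2 - 1) := sqrt_pos.2 (by nlinarith)
  have hN : 0 < 1 + B * y + √((B ^ 2 - 1) * (y ^ 2 - 1)) := by positivity
  have hBy : 0 < B + y := by linarith
  have hnum := ((hasDerivAt_id' y).const_mul B |>.const_add 1).add
    (hasDerivAt_sqrt_mul_sq_sub_one hB2 hy)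
  refine ((hnum.div ((hasDerivAt_id' y).const_add B) hBy.ne').log
    (div_pos hN hBy).ne').congr_deriv ?_
  simp only [Pi.add_apply, Pi.div_apply]
  rw [sqrt_mul hB2] at hN ⊢
  field_simp
  linear_combination (-(√(y ^ 2 - 1)) * (B + y)) * hc + (-√(B ^ 2 - 1) * (B + y)) * hs

lemma continuousOn_log_one_add_mul_add_sqrt_div {B : ℝ} (hB : 1 ≤ B) :
    ContinuousOn (fun t => log ((1 + B * t + √((B ^ 2 - 1) * (t ^ 2 - 1))) / (B + t))) (Ici 1) := by
  refine ContinuousOn.log (by fun_prop (disch := intro t ht; simp only [mem_Ici] at ht; linarith)) ?_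
  intro t ht
  simp only [mem_Ici] at ht
  have : 0 < B + t := by linarith
  positivity

/-- For `x ≥ 1` and `B > 1`,
`∫_1^x (x-y)/(√(y²-1)(y+B)) dy = (B+x)/√(B²-1) log((1+Bx+√((B²-1)(x²-1)))/(B+x))
  + (1/2) log((x-√(x²-1))/(x+√(x²-1)))`. -/
theorem rate_function_integral (x B : ℝ) (hx : 1 ≤ x) (hB : 1 < B) :
    (∫ y in (1 : ℝ)..x, (x - y) / (Real.sqrt (y ^ 2 - 1) * (y + B)))
      = (B + x) / Real.sqrt (B ^ 2 - 1) *
          Real.log ((1 + B * x + Real.sqrt ((B ^ 2 - 1) * (x ^ 2 - 1))) / (B + x))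
        + 1 / 2 * Real.log ((x - Real.sqrt (x ^ 2 - 1)) / (x + Real.sqrt (x ^ 2 - 1))) := by
  have hc : 0 < √(B ^ 2 - 1) := sqrt_pos.2 (by nlinarith)
  set G : ℝ → ℝ := fun t => (B + x) / √(B ^ 2 - 1) *
    log ((1 + B * t + √((B ^ 2 - 1) * (t ^ 2 - 1))) / (B + t)) - arcosh t with hG
  have hderiv : ∀ y ∈ Ioo 1 x, HasDerivAt G ((x - y) / (√(y ^ 2 - 1) * (y + B))) y := by
    intro y hy
    have hs : 0 < √(y ^ 2 - 1) := sqrt_pos.2 (by nlinarith [hy.1])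
    have hyB : 0 < y + B := by linarith [hy.1]
    refine (((hasDerivAt_log_one_add_mul_add_sqrt_div hB.le hy.1).const_mul _).sub
      (hasDerivAt_arcosh hy.1)).congr_deriv ?_
    field_simp
    ring
  have hcont : ContinuousOn G (Icc 1 x) :=
    ((continuousOn_const.mul (continuousOn_log_one_add_mul_add_sqrt_div hB.le)).sub
      continuousOn_arcosh).mono Icc_subset_Ici_self
  have hint : IntervalIntegrable (fun y => (x - y) / (√(y ^ 2 - 1) * (y + B))) volume 1 x := by
    refine intervalIntegrable_deriv_of_nonneg (by rwa [uIcc_of_le hx]) ?_ ?_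
    all_goals simp only [min_eq_left hx, max_eq_right hx]
    · exact hderiv
    · intro y hy
      have : 0 < y + B := by linarith [hy.1]
      exact div_nonneg (by linarith [hy.2]) (by positivity)
  rw [integral_eq_sub_of_hasDerivAt_of_le hx hcont hderiv hint, half_log_sub_sqrt_div_add_sqrt hx]
  have hG1 : G 1 = 0 := by simp [hG, add_comm B 1]
  rw [hG1, sub_zero]
  exact sub_eq_add_neg _ _
end
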